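/- arXiv:2006.06838 — 6 statements merged into one kernel-verified Lean document; each statement's English description precedes it below -/
import Mathlib

section
/- There exist a constant K > 0 and N ∈ ℕ such that for all n ≥ N and all pairs (z,c) ∈ Ω_n (i.e. z,c ∈ ℕ with z ≤ n^{1/3} r and c ≤ n^{2/3} T r), one has |μ(n,z,c) − z − n^{−1/3} z (λ − n^{−2/3} c)| ≤ K n^{−1/3}. (Lemma 3.1, mean expansion.) -/
/-!
Write `s = n^(-1/3)`, so that `n s³ = 1` and `p_n = s³ + λ s⁴`. Since `n s³ = 1`, the quantity to
bound equals `(n - c)(q - z p_n) - z c λ s⁴` exactly. The second-order Bonferroni bound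
`|q - z p| ≤ (z p)² / 2` and `z p_n = O(s²)` make the first term `O(n s⁴) = O(s)`, and
`z c = O(n² s³)` makes the second one `O(n² s⁷) = O(s)`.
-/

open Filter Real

lemma one_sub_pow_le_one_sub_mul_add_sq {p : ℝ} (hp0 : 0 ≤ p) (hp1 : p ≤ 1) (z : ℕ) :
    (1 - p) ^ z ≤ 1 - z * p + (z * p) ^ 2 / 2 := by
  induction z with
  | zero => norm_num
  | succ z ih =>
    have hz : (0 : ℝ) ≤ z := z.cast_nonneg
    calc (1 - p) ^ (z + 1) = (1 - p) ^ z * (1 - p) := pow_succ _ _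
      _ ≤ (1 - z * p + (z * p) ^ 2 / 2) * (1 - p) := by gcongr
      _ ≤ 1 - (z + 1 : ℕ) * p + ((z + 1 : ℕ) * p) ^ 2 / 2 := by
        push_cast
        nlinarith [mul_nonneg (mul_nonneg (mul_nonneg hz hz) hp0) (mul_nonneg hp0 hp0)]

lemma abs_one_sub_one_sub_pow_sub_mul_le {p : ℝ} (hp0 : 0 ≤ p) (hp1 : p ≤ 1) (z : ℕ) :
    |1 - (1 - p) ^ z - z * p| ≤ (z * p) ^ 2 / 2 := by
  have lower : 1 - z * p ≤ (1 - p) ^ z := by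
    simpa [sub_eq_add_neg] using one_add_mul_le_pow (a := -p) (by linarith) z
  have upper := one_sub_pow_le_one_sub_mul_add_sq hp0 hp1 z
  rw [abs_le]
  constructor
  · linarith
  · nlinarith [sq_nonneg ((z : ℝ) * p)]

lemma rpow_neg_third_pow {x : ℝ} (hx : 0 ≤ x) (k : ℕ) :
    (x ^ (-(1 : ℝ) / 3)) ^ k = x ^ (-(k : ℝ) / 3) := by
  rw [← rpow_natCast, ← rpow_mul hx]
  ring_nf

lemma mul_rpow_neg_third_pow {x : ℝ} (hx : 0 < x) (k : ℕ) :
    x * (x ^ (-(1 : ℝ) / 3)) ^ k = x ^ ((3 - k : ℝ) / 3) := by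
  rw [rpow_neg_third_pow hx.le]
  nth_rewrite 1 [← rpow_one x]
  rw [← rpow_add hx]
  ring_nf

lemma eventually_rpow_neg_third_small (lam : ℝ) :
    ∀ᶠ n : ℕ in atTop, 0 < (n : ℝ) ∧ (n : ℝ) ^ (-(1 : ℝ) / 3) ≤ 1 / 2 ∧
      |lam| * (n : ℝ) ^ (-(1 : ℝ) / 3) ≤ 1 := by
  have hlim : Tendsto (fun n : ℕ ↦ (n : ℝ) ^ (-(1 : ℝ) / 3)) atTop (nhds 0) := by
    simpa [Function.comp_def, neg_div] using
      (tendsto_rpow_neg_atTop (y := 1 / 3) (by norm_num)).comp tendsto_natCast_atTop_atTop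
  have hl : 0 < |lam| + 1 := by positivity
  filter_upwards [eventually_gt_atTop 0,
    hlim.eventually (ge_mem_nhds (by norm_num : (0 : ℝ) < 1 / 2)),
    hlim.eventually (ge_mem_nhds (one_div_pos.mpr hl))] with n hn hs hls
  refine ⟨by exact_mod_cast hn, hs, ?_⟩
  calc |lam| * (n : ℝ) ^ (-(1 : ℝ) / 3) ≤ (|lam| + 1) * (1 / (|lam| + 1)) := by
        gcongr
        linarith
    _ = 1 := by field_simp

lemma cube_add_mul_pow_four_mem_Icc {lam s : ℝ} (hs0 : 0 < s) (hs : s ≤ 1 / 2)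
    (hls : |lam| * s ≤ 1) : 0 ≤ s ^ 3 + lam * s ^ 4 ∧ s ^ 3 + lam * s ^ 4 ≤ 1 := by
  have hlam : |lam * s| ≤ 1 := by rwa [abs_mul, abs_of_pos hs0]
  have hs3 : s ^ 3 ≤ 1 / 8 := by
    calc s ^ 3 ≤ (1 / 2) ^ 3 := by gcongr
      _ = 1 / 8 := by norm_num
  have hexp : s ^ 3 + lam * s ^ 4 = s ^ 3 * (1 + lam * s) := by ring
  rw [hexp]
  obtain ⟨h1, h2⟩ := abs_le.mp hlam
  constructor
  · exact mul_nonneg (pow_pos hs0 3).le (by linarith)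
  · nlinarith [pow_pos hs0 3]

lemma abs_mean_sub_expansion_le {lam r T n s z c q : ℝ} (hr : 0 ≤ r) (hT : 0 ≤ T)
    (hs0 : 0 < s) (hs1 : s ≤ 1) (hns : n * s ^ 3 = 1)
    (hz0 : 0 ≤ z) (hz : z ≤ n * s ^ 2 * r) (hc0 : 0 ≤ c) (hc : c ≤ n * s * T * r)
    (hq : |q - z * (s ^ 3 + lam * s ^ 4)| ≤ (z * (s ^ 3 + lam * s ^ 4)) ^ 2 / 2) :
    |(n - c) * q - z - s * z * (lam - s ^ 2 * c)|
      ≤ (r ^ 2 * (1 + |lam|) ^ 2 * (1 + T * r) / 2 + r ^ 2 * T * |lam|) * s := by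
  set p := s ^ 3 + lam * s ^ 4
  have hn : 0 < n := by nlinarith [pow_pos hs0 3]
  have decomp : (n - c) * q - z - s * z * (lam - s ^ 2 * c)
      = (n - c) * (q - z * p) - z * c * lam * s ^ 4 := by
    linear_combination (z + z * lam * s) * hns
  have hp : |p| ≤ (1 + |lam|) * s ^ 3 := by
    have hs43 : s ^ 4 ≤ s ^ 3 := pow_le_pow_of_le_one hs0.le hs1 (by norm_num)
    calc |p| ≤ |s ^ 3| + |lam * s ^ 4| := abs_add_le _ _
      _ = s ^ 3 + |lam| * s ^ 4 := by
          rw [abs_mul, abs_of_pos (pow_pos hs0 3), abs_of_pos (pow_pos hs0 4)]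
      _ ≤ s ^ 3 + |lam| * s ^ 3 := by gcongr
      _ = (1 + |lam|) * s ^ 3 := by ring
  have hzp : |z * p| ≤ r * (1 + |lam|) * s ^ 2 := by
    calc |z * p| = z * |p| := by rw [abs_mul, abs_of_nonneg hz0]
      _ ≤ (n * s ^ 2 * r) * ((1 + |lam|) * s ^ 3) := by gcongr
      _ = r * (1 + |lam|) * s ^ 2 * (n * s ^ 3) := by ring
      _ = r * (1 + |lam|) * s ^ 2 := by rw [hns, mul_one]
  have hnc : |n - c| ≤ n * (1 + T * r) := by
    have : n * s * T * r ≤ n * T * r := by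
      have hnTr := mul_nonneg (mul_nonneg hn.le hT) hr
      nlinarith
    rw [abs_le]
    constructor <;> nlinarith
  have first : |(n - c) * (q - z * p)| ≤ r ^ 2 * (1 + |lam|) ^ 2 * (1 + T * r) / 2 * s := by
    have hzp2 : (z * p) ^ 2 ≤ (r * (1 + |lam|) * s ^ 2) ^ 2 := by
      rw [← sq_abs]; gcongr
    calc |(n - c) * (q - z * p)| = |n - c| * |q - z * p| := abs_mul _ _
      _ ≤ n * (1 + T * r) * ((r * (1 + |lam|) * s ^ 2) ^ 2 / 2) := by
          gcongr
          exact hq.trans (by gcongr)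
      _ = r ^ 2 * (1 + |lam|) ^ 2 * (1 + T * r) / 2 * s * (n * s ^ 3) := by ring
      _ = _ := by rw [hns, mul_one]
  have second : |z * c * lam * s ^ 4| ≤ r ^ 2 * T * |lam| * s := by
    calc |z * c * lam * s ^ 4| = z * c * (|lam| * s ^ 4) := by
          rw [abs_mul, abs_mul, abs_mul, abs_of_nonneg hz0, abs_of_nonneg hc0,
            abs_of_pos (pow_pos hs0 4), mul_assoc]
      _ ≤ (n * s ^ 2 * r) * (n * s * T * r) * (|lam| * s ^ 4) := by
          gcongr
      _ = r ^ 2 * T * |lam| * s * (n * s ^ 3) ^ 2 := by ring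
      _ = _ := by rw [hns, one_pow, mul_one]
  calc |(n - c) * q - z - s * z * (lam - s ^ 2 * c)|
      ≤ |(n - c) * (q - z * p)| + |z * c * lam * s ^ 4| := decomp ▸ abs_sub _ _
    _ ≤ _ := by linarith

/-- Lemma 3.1 (mean expansion). Fix `λ ∈ ℝ`, `r > 0`, `T > 0`. With
`p n = n⁻¹ + λ n^(-4/3)`, `q n z = 1 - (1 - p n)^z` and mean
`μ n z c = (n - c) * q n z` of the binomial `Bin(n - c, q n z)`, there exist `K > 0`
and `N` such that for all `n ≥ N` and all `(z, c) ∈ Ω_n` (i.e. `z ≤ n^(1/3) r` and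
`c ≤ n^(2/3) T r`), `|μ(n,z,c) - z - n^(-1/3) z (λ - n^(-2/3) c)| ≤ K n^(-1/3)`. -/
theorem stmt_0 (lam r T : ℝ) (hr : 0 < r) (hT : 0 < T)
    (p : ℕ → ℝ) (hp : ∀ n : ℕ, p n = (n : ℝ)⁻¹ + lam * (n : ℝ) ^ (-(4 : ℝ) / 3))
    (q : ℕ → ℕ → ℝ) (hq : ∀ (n : ℕ) (z : ℕ), q n z = 1 - (1 - p n) ^ z)
    (μ : ℕ → ℕ → ℕ → ℝ)
    (hμ : ∀ (n : ℕ) (z c : ℕ), μ n z c = ((n : ℝ) - (c : ℝ)) * q n z) :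
    ∃ K : ℝ, 0 < K ∧ ∃ N : ℕ, ∀ n : ℕ, N ≤ n → ∀ z c : ℕ,
      (z : ℝ) ≤ (n : ℝ) ^ ((1 : ℝ) / 3) * r →
      (c : ℝ) ≤ (n : ℝ) ^ ((2 : ℝ) / 3) * T * r →
      |μ n z c - (z : ℝ)
          - (n : ℝ) ^ (-(1 : ℝ) / 3) * (z : ℝ) * (lam - (n : ℝ) ^ (-(2 : ℝ) / 3) * (c : ℝ))|
        ≤ K * (n : ℝ) ^ (-(1 : ℝ) / 3) := by
  obtain ⟨N, hN⟩ := eventually_atTop.mp (eventually_rpow_neg_third_small lam)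
  refine ⟨r ^ 2 * (1 + |lam|) ^ 2 * (1 + T * r) / 2 + r ^ 2 * T * |lam|, by positivity, N,
    fun n hn z c hz hc ↦ ?_⟩
  obtain ⟨hn0, hs, hls⟩ := hN n hn
  set s := (n : ℝ) ^ (-(1 : ℝ) / 3)
  have hs0 : 0 < s := rpow_pos_of_pos hn0 _
  have hns : (n : ℝ) * s ^ 3 = 1 := by simpa using mul_rpow_neg_third_pow hn0 3
  have hpn : p n = s ^ 3 + lam * s ^ 4 := by
    rw [hp, show (-(4 : ℝ) / 3) = -((4 : ℕ) : ℝ) / 3 by norm_num, ← rpow_neg_third_pow hn0.le,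
      ← eq_inv_of_mul_eq_one_right hns]
  have hz' : (z : ℝ) ≤ n * s ^ 2 * r := by
    rwa [show (1 : ℝ) / 3 = (3 - ((2 : ℕ) : ℝ)) / 3 by norm_num,
      ← mul_rpow_neg_third_pow hn0] at hz
  have hc' : (c : ℝ) ≤ n * s * T * r := by
    rwa [show (2 : ℝ) / 3 = (3 - ((1 : ℕ) : ℝ)) / 3 by norm_num, ← mul_rpow_neg_third_pow hn0,
      pow_one] at hc
  have h23 : (n : ℝ) ^ (-(2 : ℝ) / 3) = s ^ 2 := by
    rw [show (-(2 : ℝ) / 3) = -((2 : ℕ) : ℝ) / 3 by norm_num, ← rpow_neg_third_pow hn0.le]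
  obtain ⟨hp0, hp1⟩ := cube_add_mul_pow_four_mem_Icc hs0 hs hls
  rw [hμ, hq, hpn, h23]
  exact abs_mean_sub_expansion_le hr.le hT.le hs0 (by linarith) hns z.cast_nonneg hz'
    c.cast_nonneg hc' (abs_one_sub_one_sub_pow_sub_mul_le hp0 hp1 z)
end

section
/- There exist a constant K > 0 and N ∈ ℕ such that for all n ≥ N and all pairs (z,c) ∈ Ω_n (i.e. z,c ∈ ℕ with z ≤ n^{1/3} r and c ≤ n^{2/3} T r), one has |σ²(n,z,c) − z − n^{−1/3} z (λ − n^{−2/3} c)| ≤ K n^{−1/3}. (Lemma 3.1, variance expansion.) -/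
/-!
Put `t = n^(1/3)`, so that `n = t³` and `p = t⁻³ (1 + λ t⁻¹)`. The probability
`q = 1 - (1 - p)^z` lies in `[0, zp]` and equals `zp` up to `(zp)²/2`, so `σ²` equals
`(n - c) z p` up to `(3/2) n (zp)²`, which is `O(t⁻¹)` because `zp = O(t⁻²)` on `Ω_n`.
Since `n p = 1 + λ t⁻¹`, the term `(n - c) z p` is exactly `z + t⁻¹ z (λ - t⁻² c) - λ z c t⁻⁴`,
and `z c t⁻⁴ = O(t⁻¹)` on `Ω_n`.
-/

lemma one_sub_pow_le_one_sub_mul_add_sq_div_two {P : ℝ} (hP0 : 0 ≤ P) (hP1 : P ≤ 1) (z : ℕ) :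
    (1 - P) ^ z ≤ 1 - z * P + (z * P) ^ 2 / 2 := by
  induction z with
  | zero => norm_num
  | succ k ih =>
    have hk : (0 : ℝ) ≤ k := k.cast_nonneg
    have hmul := mul_le_mul_of_nonneg_right ih (sub_nonneg.mpr hP1)
    rw [pow_succ]
    push_cast
    nlinarith [mul_nonneg (mul_nonneg hk hP0) (mul_nonneg (mul_nonneg hk hP0) hP0)]

lemma one_sub_one_sub_pow_bounds {P : ℝ} (hP0 : 0 ≤ P) (hP1 : P ≤ 1) (z : ℕ) :
    0 ≤ 1 - (1 - P) ^ z ∧ 1 - (1 - P) ^ z ≤ z * P ∧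
      |1 - (1 - P) ^ z - z * P| ≤ (z * P) ^ 2 / 2 := by
  have hpow : (1 - P) ^ z ≤ 1 := pow_le_one₀ (by linarith) (by linarith)
  have hbernoulli : 1 + z * -P ≤ (1 + -P) ^ z := one_add_mul_le_pow (by linarith) z
  rw [← sub_eq_add_neg] at hbernoulli
  have htaylor := one_sub_pow_le_one_sub_mul_add_sq_div_two hP0 hP1 z
  refine ⟨by linarith, by linarith, abs_le.mpr ⟨by linarith, by nlinarith⟩⟩

lemma abs_mul_one_sub_pow_variance_sub_le {m P : ℝ} (hm : 0 ≤ m) (hP0 : 0 ≤ P) (hP1 : P ≤ 1)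
    (z : ℕ) :
    |m * (1 - (1 - P) ^ z) * (1 - (1 - (1 - P) ^ z)) - m * (z * P)| ≤ 3 / 2 * m * (z * P) ^ 2 := by
  set Q := 1 - (1 - P) ^ z
  obtain ⟨hQ0, hQzP, hQ⟩ := one_sub_one_sub_pow_bounds hP0 hP1 z
  have hQsq : Q ^ 2 ≤ (z * P) ^ 2 := pow_le_pow_left₀ hQ0 hQzP 2
  calc |m * Q * (1 - Q) - m * (z * P)| = |m * (Q - z * P) - m * Q ^ 2| := by ring_nf
    _ ≤ |m * (Q - z * P)| + |m * Q ^ 2| := abs_sub _ _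
    _ = m * |Q - z * P| + m * Q ^ 2 := by
        rw [abs_mul, abs_mul, abs_of_nonneg hm, abs_of_nonneg (sq_nonneg Q)]
    _ ≤ m * ((z * P) ^ 2 / 2) + m * (z * P) ^ 2 := by gcongr
    _ = 3 / 2 * m * (z * P) ^ 2 := by ring

lemma abs_variance_sub_expansion_le {lam r T t : ℝ} (ht : max (max |lam| (T * r)) 2 ≤ t)
    {z c : ℕ} (hz : (z : ℝ) ≤ t * r) (hc : (c : ℝ) ≤ t ^ 2 * T * r) :
    |(t ^ 3 - c) * (1 - (1 - (t⁻¹ ^ 3 + lam * t⁻¹ ^ 4)) ^ z)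
          * (1 - (1 - (1 - (t⁻¹ ^ 3 + lam * t⁻¹ ^ 4)) ^ z))
        - z - t⁻¹ * z * (lam - t⁻¹ ^ 2 * c)|
      ≤ r ^ 2 * (6 + |lam| * T) * t⁻¹ := by
  simp only [max_le_iff] at ht
  obtain ⟨⟨hlam, hTr⟩, ht2⟩ := ht
  set s := t⁻¹ with hs
  set P := s ^ 3 + lam * s ^ 4 with hP
  have ht0 : 0 < t := by linarith
  have hs0 : 0 < s := inv_pos.mpr ht0
  have hts : t * s = 1 := mul_inv_cancel₀ ht0.ne'
  have hs2 : s ≤ 1 / 2 := by rw [hs, one_div]; exact inv_anti₀ two_pos ht2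
  have hlams : |lam * s| ≤ 1 := by
    rw [abs_mul, abs_of_pos hs0, ← hts]; exact mul_le_mul_of_nonneg_right hlam hs0.le
  obtain ⟨hlams0, hlams1⟩ := abs_le.mp hlams
  have hP0 : 0 ≤ P := by rw [hP]; nlinarith [pow_pos hs0 3]
  have hP2 : P ≤ 2 * s ^ 3 := by rw [hP]; nlinarith [pow_pos hs0 3]
  have hP1 : P ≤ 1 := by nlinarith [pow_le_pow_left₀ hs0.le hs2 3]
  have htr : 0 ≤ t * r := z.cast_nonneg.trans hz
  have hzP0 : 0 ≤ z * P := mul_nonneg z.cast_nonneg hP0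
  have hzP : z * P ≤ 2 * r * s ^ 2 := by
    calc (z : ℝ) * P ≤ (t * r) * (2 * s ^ 3) := mul_le_mul hz hP2 hP0 htr
      _ = 2 * r * s ^ 2 * (t * s) := by ring
      _ = 2 * r * s ^ 2 := by rw [hts, mul_one]
  have hcn : (c : ℝ) ≤ t ^ 3 := by
    calc (c : ℝ) ≤ t ^ 2 * (T * r) := by rwa [← mul_assoc]
      _ ≤ t ^ 2 * t := by gcongr
      _ = t ^ 3 := by ring
  have hvar := abs_mul_one_sub_pow_variance_sub_le (sub_nonneg.mpr hcn) hP0 hP1 z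
  have hsq : t ^ 3 * (z * P) ^ 2 ≤ 4 * r ^ 2 * s := by
    calc t ^ 3 * (z * P) ^ 2 ≤ t ^ 3 * (2 * r * s ^ 2) ^ 2 := by gcongr
      _ = 4 * r ^ 2 * s * (t * s) ^ 3 := by ring
      _ = 4 * r ^ 2 * s := by rw [hts, one_pow, mul_one]
  have hzc : z * c * s ^ 4 ≤ T * r ^ 2 * s := by
    calc (z : ℝ) * c * s ^ 4 ≤ (t * r) * (t ^ 2 * T * r) * s ^ 4 :=
          mul_le_mul_of_nonneg_right (mul_le_mul hz hc c.cast_nonneg htr) (by positivity)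
      _ = T * r ^ 2 * s * (t * s) ^ 3 := by ring
      _ = T * r ^ 2 * s := by rw [hts, one_pow, mul_one]
  -- the identity `t³ P = 1 + λ s` is what cancels the main terms
  have hexp : (t ^ 3 - c) * (z * P) = z + s * z * (lam - s ^ 2 * c) - lam * (z * c * s ^ 4) := by
    rw [hP]
    linear_combination (z : ℝ) * (1 + lam * s) * (t ^ 2 * s ^ 2 + t * s + 1) * hts
  set Q := 1 - (1 - P) ^ z
  calc |(t ^ 3 - c) * Q * (1 - Q) - z - s * z * (lam - s ^ 2 * c)|
      = |((t ^ 3 - c) * Q * (1 - Q) - (t ^ 3 - c) * (z * P)) - lam * (z * c * s ^ 4)| := by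
        rw [hexp]; ring_nf
    _ ≤ |(t ^ 3 - c) * Q * (1 - Q) - (t ^ 3 - c) * (z * P)| + |lam| * (z * c * s ^ 4) := by
        grw [abs_sub, abs_mul, abs_of_nonneg (by positivity : (0 : ℝ) ≤ z * c * s ^ 4)]
    _ ≤ 3 / 2 * (t ^ 3 * (z * P) ^ 2) + |lam| * (T * r ^ 2 * s) := by
        grw [hvar, hzc]
        nlinarith [sq_nonneg ((z : ℝ) * P), c.cast_nonneg (α := ℝ)]
    _ ≤ r ^ 2 * (6 + |lam| * T) * s := by grw [hsq]; exact le_of_eq (by ring)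

namespace Real

lemma rpow_natCast_div_three {x : ℝ} (hx : 0 ≤ x) (k : ℕ) :
    x ^ ((k : ℝ) / 3) = (x ^ ((1 : ℝ) / 3)) ^ k := by
  rw [← rpow_natCast, ← rpow_mul hx, one_div_mul_eq_div]

lemma rpow_neg_natCast_div_three {x : ℝ} (hx : 0 ≤ x) (k : ℕ) :
    x ^ (-(k : ℝ) / 3) = (x ^ ((1 : ℝ) / 3))⁻¹ ^ k := by
  rw [neg_div, rpow_neg hx, rpow_natCast_div_three hx, inv_pow]

lemma rpow_one_div_three_pow_three {x : ℝ} (hx : 0 ≤ x) : (x ^ ((1 : ℝ) / 3)) ^ 3 = x := by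
  rw [← rpow_natCast_div_three hx]; norm_num

end Real

theorem stmt_1_general (lam r T : ℝ)
    (p : ℕ → ℝ) (hp : ∀ n : ℕ, p n = (n : ℝ)⁻¹ + lam * (n : ℝ) ^ (-(4 : ℝ) / 3))
    (q : ℕ → ℕ → ℝ) (hq : ∀ (n : ℕ) (z : ℕ), q n z = 1 - (1 - p n) ^ z)
    (σsq : ℕ → ℕ → ℕ → ℝ)
    (hσ : ∀ (n : ℕ) (z c : ℕ), σsq n z c = ((n : ℝ) - (c : ℝ)) * q n z * (1 - q n z)) :
    ∃ K : ℝ, 0 < K ∧ ∃ N : ℕ, ∀ n : ℕ, N ≤ n → ∀ z c : ℕ,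
      (z : ℝ) ≤ (n : ℝ) ^ ((1 : ℝ) / 3) * r →
      (c : ℝ) ≤ (n : ℝ) ^ ((2 : ℝ) / 3) * T * r →
      |σsq n z c - (z : ℝ)
          - (n : ℝ) ^ (-(1 : ℝ) / 3) * (z : ℝ) * (lam - (n : ℝ) ^ (-(2 : ℝ) / 3) * (c : ℝ))|
        ≤ K * (n : ℝ) ^ (-(1 : ℝ) / 3) := by
  set M := max (max |lam| (T * r)) 2
  obtain ⟨N, hN⟩ := exists_nat_ge (M ^ 3)
  refine ⟨max (r ^ 2 * (6 + |lam| * T)) 1, by positivity, N, fun n hn z c hz hc => ?_⟩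
  have hn0 : (0 : ℝ) ≤ n := n.cast_nonneg
  have ht0 := Real.rpow_nonneg hn0 ((1 : ℝ) / 3)
  have ht3 := Real.rpow_one_div_three_pow_three hn0
  have hneg1 := Real.rpow_neg_natCast_div_three hn0 1
  have hneg2 := Real.rpow_neg_natCast_div_three hn0 2
  have hneg4 := Real.rpow_neg_natCast_div_three hn0 4
  have hpos2 := Real.rpow_natCast_div_three hn0 2
  push_cast at hneg1 hneg2 hneg4 hpos2
  rw [hσ, hq, hp, hneg1, hneg2, hneg4, pow_one]
  rw [hpos2] at hc
  generalize (n : ℝ) ^ ((1 : ℝ) / 3) = t at ht0 ht3 hz hc ⊢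
  rw [← ht3, ← inv_pow]
  have hMt : M ≤ t := by
    rw [← pow_le_pow_iff_left₀ (by positivity) ht0 three_ne_zero, ht3]
    exact hN.trans (by exact_mod_cast hn)
  exact (abs_variance_sub_expansion_le hMt hz hc).trans
    (mul_le_mul_of_nonneg_right (le_max_left _ _) (inv_nonneg.mpr ht0))

/-- Lemma 3.1 (variance expansion). With `p n = n⁻¹ + λ n^(-4/3)`,
`q n z = 1 - (1 - p n)^z` and variance `σ² n z c = (n - c) * q n z * (1 - q n z)` of the
binomial `Bin(n - c, q n z)`, there exist `K > 0` and `N` such that for all `n ≥ N` and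
all `(z, c) ∈ Ω_n` (i.e. `z ≤ n^(1/3) r` and `c ≤ n^(2/3) T r`),
`|σ²(n,z,c) - z - n^(-1/3) z (λ - n^(-2/3) c)| ≤ K n^(-1/3)`. -/
theorem stmt_1 (lam r T : ℝ) (hr : 0 < r) (hT : 0 < T)
    (p : ℕ → ℝ) (hp : ∀ n : ℕ, p n = (n : ℝ)⁻¹ + lam * (n : ℝ) ^ (-(4 : ℝ) / 3))
    (q : ℕ → ℕ → ℝ) (hq : ∀ (n : ℕ) (z : ℕ), q n z = 1 - (1 - p n) ^ z)
    (σsq : ℕ → ℕ → ℕ → ℝ)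
    (hσ : ∀ (n : ℕ) (z c : ℕ), σsq n z c = ((n : ℝ) - (c : ℝ)) * q n z * (1 - q n z)) :
    ∃ K : ℝ, 0 < K ∧ ∃ N : ℕ, ∀ n : ℕ, N ≤ n → ∀ z c : ℕ,
      (z : ℝ) ≤ (n : ℝ) ^ ((1 : ℝ) / 3) * r →
      (c : ℝ) ≤ (n : ℝ) ^ ((2 : ℝ) / 3) * T * r →
      |σsq n z c - (z : ℝ)
          - (n : ℝ) ^ (-(1 : ℝ) / 3) * (z : ℝ) * (lam - (n : ℝ) ^ (-(2 : ℝ) / 3) * (c : ℝ))|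
        ≤ K * (n : ℝ) ^ (-(1 : ℝ) / 3) :=
  stmt_1_general lam r T p hp q hq σsq hσ
end

section
/- There exist a constant K > 0 and N ∈ ℕ such that for all n ≥ N and all pairs (z,c) ∈ Ω_n (i.e. z,c ∈ ℕ with z ≤ n^{1/3} r and c ≤ n^{2/3} T r), one has κ(n,z,c) ≤ K n^{2/3}, where κ(n,z,c) is the fourth moment of β(n,z,c) − z. (Lemma 3.1, fourth-moment bound.) -/
/-!
The fourth moment of `Binomial(m, q)` about `z` is a combination of the factorial moments
`m(m-1)⋯(m-k+1) qᵏ`; regrouped around the mean `μ = m q` it is at most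
`μ + 3μ² + 4μD + 6μD² + D⁴` as soon as `|μ - z| ≤ D`.

Write `X = n^{1/3}`, so that `n p = 1 + λ / X`. For `m = n - c` with `z ≤ X r` and
`c ≤ X² T r`, Bernoulli's inequalities `z p - (z p)² / 2 ≤ q ≤ z p` give
`μ = z + z λ / X + O(c z p + n (z p)²) = z + O(1)`. Hence `D` can be chosen independently
of `n`, `μ = O(X)`, and the fourth moment is `O(X²) = O(n^{2/3})`.
-/

open Finset

theorem Nat.cast_descFactorial_succ {R : Type*} [CommRing R] (j k : ℕ) :
    (j.descFactorial (k + 1) : R) = ((j : R) - k) * j.descFactorial k := by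
  rcases le_or_gt k j with h | h
  · rw [Nat.descFactorial_succ, Nat.cast_mul, Nat.cast_sub h]
  · rw [Nat.descFactorial_eq_zero_iff_lt.2 h, Nat.descFactorial_eq_zero_iff_lt.2 (by omega)]
    simp

theorem Nat.choose_add_mul_descFactorial (m k i : ℕ) :
    m.choose (k + i) * (k + i).descFactorial k = m.descFactorial k * (m - k).choose i := by
  rw [Nat.descFactorial_eq_factorial_mul_choose, Nat.descFactorial_eq_factorial_mul_choose,
    mul_left_comm, Nat.choose_mul (Nat.le_add_right k i), Nat.add_sub_cancel_left, mul_assoc]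

section BinomialMoments

variable {R : Type*} [CommRing R]

theorem sum_choose_mul_pow_mul_descFactorial (m k : ℕ) (q : R) :
    ∑ j ∈ range (m + 1), (m.choose j : R) * q ^ j * (1 - q) ^ (m - j) * j.descFactorial k
      = m.descFactorial k * q ^ k := by
  rcases lt_or_ge m k with hmk | hkm
  · rw [Nat.descFactorial_eq_zero_iff_lt.2 hmk, Nat.cast_zero, zero_mul]
    refine sum_eq_zero fun j hj => ?_
    rw [Nat.descFactorial_eq_zero_iff_lt.2 (by grind), Nat.cast_zero, mul_zero]
  obtain ⟨l, rfl⟩ := Nat.exists_eq_add_of_le hkm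
  rw [show k + l + 1 = k + (l + 1) by omega, sum_range_add,
    sum_eq_zero fun j hj => by rw [Nat.descFactorial_eq_zero_iff_lt.2 (mem_range.1 hj)]; simp,
    zero_add]
  have hbinom : ∑ i ∈ range (l + 1), (l.choose i : R) * q ^ i * (1 - q) ^ (l - i) = 1 := by
    calc _ = (q + (1 - q)) ^ l := by rw [add_pow]; exact sum_congr rfl fun i _ => by ring
      _ = 1 := by rw [add_sub_cancel, one_pow]
  calc ∑ i ∈ range (l + 1), ((k + l).choose (k + i) : R) * q ^ (k + i)
          * (1 - q) ^ (k + l - (k + i)) * (k + i).descFactorial k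
      = ∑ i ∈ range (l + 1), ((k + l).descFactorial k : R) * q ^ k
          * ((l.choose i : R) * q ^ i * (1 - q) ^ (l - i)) := by
        refine sum_congr rfl fun i _ => ?_
        have h := congrArg (Nat.cast (R := R)) (Nat.choose_add_mul_descFactorial (k + l) k i)
        push_cast at h
        rw [Nat.add_sub_add_left, Nat.add_sub_cancel_left] at *
        linear_combination (q ^ k * q ^ i * (1 - q) ^ (l - i)) * h
    _ = (k + l).descFactorial k * q ^ k := by rw [← mul_sum, hbinom, mul_one]

/-- The right side is `μ₄ + 4 μ₃ d + 6 μ₂ d² + d⁴`, where `μₖ` are the central moments of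
`Binomial(m, q)` and `d = m q - z`. -/
theorem sum_choose_mul_pow_mul_sub_pow_four (m : ℕ) (q z : R) :
    ∑ j ∈ range (m + 1), (m.choose j : R) * q ^ j * (1 - q) ^ (m - j) * ((j : R) - z) ^ 4
      = m * q * (1 - q) * (1 + 3 * (m - 2) * q * (1 - q))
        + 4 * (m * q * (1 - q) * (1 - 2 * q)) * (m * q - z)
        + 6 * (m * q * (1 - q)) * (m * q - z) ^ 2 + (m * q - z) ^ 4 := by
  have hterm (j : ℕ) : (m.choose j : R) * q ^ j * (1 - q) ^ (m - j) * ((j : R) - z) ^ 4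
      = (m.choose j : R) * q ^ j * (1 - q) ^ (m - j) * j.descFactorial 4
        + (6 - 4 * z) * ((m.choose j : R) * q ^ j * (1 - q) ^ (m - j) * j.descFactorial 3)
        + (7 - 12 * z + 6 * z ^ 2)
          * ((m.choose j : R) * q ^ j * (1 - q) ^ (m - j) * j.descFactorial 2)
        + (1 - 4 * z + 6 * z ^ 2 - 4 * z ^ 3)
          * ((m.choose j : R) * q ^ j * (1 - q) ^ (m - j) * j.descFactorial 1)
        + z ^ 4 * ((m.choose j : R) * q ^ j * (1 - q) ^ (m - j) * j.descFactorial 0) := by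
    simp only [Nat.cast_descFactorial_succ, Nat.descFactorial_zero, Nat.cast_one]
    ring
  simp only [hterm, sum_add_distrib, ← mul_sum, sum_choose_mul_pow_mul_descFactorial]
  simp only [Nat.cast_descFactorial_succ, Nat.descFactorial_zero, Nat.cast_one]
  ring

end BinomialMoments

def fourthMomentBound (μ D : ℝ) : ℝ := μ + 3 * μ ^ 2 + 4 * μ * D + 6 * μ * D ^ 2 + D ^ 4

theorem sum_choose_mul_pow_mul_sub_pow_four_le (m : ℕ) {q z D : ℝ} (hq0 : 0 ≤ q) (hq1 : q ≤ 1)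
    (hD : |m * q - z| ≤ D) :
    ∑ j ∈ range (m + 1), (m.choose j : ℝ) * q ^ j * (1 - q) ^ (m - j) * ((j : ℝ) - z) ^ 4
      ≤ fourthMomentBound (m * q) D := by
  rw [sum_choose_mul_pow_mul_sub_pow_four, fourthMomentBound]
  set μ := (m : ℝ) * q
  set d := μ - z
  have hμ : 0 ≤ μ := by positivity
  have hv0 : 0 ≤ μ * (1 - q) := mul_nonneg hμ (by linarith)
  have hv : μ * (1 - q) ≤ μ := by nlinarith
  have hd : |d| ≤ D := hD
  have hd2 : d ^ 2 ≤ D ^ 2 := sq_le_sq' (abs_le.1 hd).1 (abs_le.1 hd).2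
  have hcentral4 : μ * (1 - q) * (1 + 3 * (m - 2) * q * (1 - q)) ≤ μ + 3 * μ ^ 2 := by
    nlinarith [mul_nonneg hv0 (mul_nonneg hq0 (sub_nonneg.2 hq1))]
  have hcentral3 : 4 * (μ * (1 - q) * (1 - 2 * q)) * d ≤ 4 * μ * D := by
    have : |μ * (1 - q) * (1 - 2 * q)| ≤ μ := by
      rw [abs_mul, abs_of_nonneg hv0]
      exact (mul_le_of_le_one_right hv0 (abs_le.2 ⟨by linarith, by linarith⟩)).trans hv
    have := (le_abs_self _).trans ((abs_mul _ d).trans_le (mul_le_mul this hd (abs_nonneg _) hμ))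
    linarith
  have hcentral2 : 6 * (μ * (1 - q)) * d ^ 2 ≤ 6 * μ * D ^ 2 := by
    nlinarith [mul_le_mul hv hd2 (sq_nonneg d) hμ]
  have hshift : d ^ 4 ≤ D ^ 4 := by
    nlinarith [mul_le_mul hd2 hd2 (sq_nonneg d) (sq_nonneg D)]
  linarith

theorem fourthMomentBound_le_mul_sq {μ A D X : ℝ} (hμ0 : 0 ≤ μ) (hμ : μ ≤ A * X) (hA : 0 ≤ A)
    (hD : 0 ≤ D) (hX : 1 ≤ X) : fourthMomentBound μ D ≤ fourthMomentBound A D * X ^ 2 := by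
  unfold fourthMomentBound
  calc _ ≤ A * X + 3 * (A * X) ^ 2 + 4 * (A * X) * D + 6 * (A * X) * D ^ 2 + D ^ 4 := by gcongr
    _ ≤ _ := by
      have hcoeff : 0 ≤ A + 4 * A * D + 6 * A * D ^ 2 := by positivity
      linear_combination mul_nonneg hcoeff (show 0 ≤ X ^ 2 - X by nlinarith)
        + mul_nonneg (pow_nonneg hD 4) (show 0 ≤ X ^ 2 - 1 by nlinarith)

section Bernoulli

variable {K : Type*} [Field K] [LinearOrder K] [IsStrictOrderedRing K] {p : K}

theorem mul_sub_sq_div_two_le_one_sub_one_sub_pow (hp0 : 0 ≤ p) (hp1 : p ≤ 1) (z : ℕ) :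
    z * p - (z * p) ^ 2 / 2 ≤ 1 - (1 - p) ^ z := by
  induction z with
  | zero => simp
  | succ n ih =>
    have h := mul_le_mul_of_nonneg_right ih (sub_nonneg.2 hp1)
    rw [pow_succ (1 - p)]
    push_cast
    nlinarith [mul_nonneg (mul_nonneg (sq_nonneg (n : K)) (sq_nonneg p)) hp0]

theorem one_sub_one_sub_pow_le_mul (hp : p ≤ 2) (z : ℕ) : 1 - (1 - p) ^ z ≤ z * p := by
  have := one_add_mul_le_pow (neg_le_neg hp) z
  rw [← sub_eq_add_neg, mul_neg] at this
  linarith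

theorem one_sub_one_sub_pow_mem_Icc (hp : p ∈ Set.Icc 0 1) (z : ℕ) :
    1 - (1 - p) ^ z ∈ Set.Icc 0 1 :=
  ⟨sub_nonneg.2 (pow_le_one₀ (by linarith [hp.2]) (by linarith [hp.1])),
    sub_le_self _ (pow_nonneg (by linarith [hp.2]) _)⟩

end Bernoulli

section Asymptotics

theorem rpow_natCast_div_three {x : ℝ} (hx : 0 ≤ x) (k : ℕ) :
    x ^ ((k : ℝ) / 3) = (x ^ ((1 : ℝ) / 3)) ^ k := by
  rw [div_eq_mul_inv, mul_comm, ← one_div, Real.rpow_mul_natCast hx]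

theorem inv_add_mul_rpow_neg_four_div_three {x : ℝ} (hx : 0 < x) (lam : ℝ) :
    x⁻¹ + lam * x ^ (-(4 : ℝ) / 3)
      = (1 + lam / x ^ ((1 : ℝ) / 3)) / (x ^ ((1 : ℝ) / 3)) ^ 3 := by
  have h4 : x ^ (-(4 : ℝ) / 3) = ((x ^ ((1 : ℝ) / 3)) ^ 4)⁻¹ := by
    rw [neg_div, Real.rpow_neg hx.le, ← rpow_natCast_div_three hx.le 4]; norm_num
  have h3 : x = (x ^ ((1 : ℝ) / 3)) ^ 3 := by
    rw [← rpow_natCast_div_three hx.le 3]; norm_num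
  have hX : 0 < x ^ ((1 : ℝ) / 3) := by positivity
  set X := x ^ ((1 : ℝ) / 3)
  rw [h4, h3]
  field_simp

variable {X lam r T : ℝ} {z c : ℕ}

theorem one_add_div_mem_Icc (hX : 2 ≤ X) (hlam : 2 * |lam| ≤ X) :
    1 + lam / X ∈ Set.Icc (1 / 2 : ℝ) (3 / 2) := by
  have hX0 : 0 < X := by linarith
  have : |lam / X| ≤ 1 / 2 := by
    rw [abs_div, abs_of_pos hX0, div_le_iff₀ hX0]; linarith
  constructor <;> linarith [abs_le.1 this]

theorem div_pow_three_mem_Icc (hX : 2 ≤ X) (hlam : 2 * |lam| ≤ X) :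
    (1 + lam / X) / X ^ 3 ∈ Set.Icc (0 : ℝ) 1 := by
  obtain ⟨hs0, hs1⟩ := one_add_div_mem_Icc hX hlam
  have hX3 : 2 ^ 3 ≤ X ^ 3 := pow_le_pow_left₀ zero_le_two hX 3
  exact ⟨by positivity, by rw [div_le_one (by positivity)]; linarith⟩

theorem abs_mul_one_sub_one_sub_pow_sub_le (hX : 2 ≤ X) (hlam : 2 * |lam| ≤ X)
    (hz : z ≤ X * r) (hc : c ≤ X ^ 2 * T * r) (hcX : c ≤ X ^ 3) :
    |(X ^ 3 - c) * (1 - (1 - (1 + lam / X) / X ^ 3) ^ z) - z|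
      ≤ r * |lam| + 2 * T * r ^ 2 + r ^ 2 := by
  obtain ⟨hs0, hs1⟩ := one_add_div_mem_Icc hX hlam
  obtain ⟨hP0, hP1⟩ := div_pow_three_mem_Icc hX hlam
  set s := 1 + lam / X with hs
  have hX0 : 0 < X := by linarith
  have hM0 : 0 ≤ X ^ 3 - c := sub_nonneg.2 hcX
  -- in the scaled variables `ζ ∈ [0, r]`, `γ ∈ [0, T r]` every term below is `O(1)`
  set ζ := (z : ℝ) / X
  set γ := (c : ℝ) / X ^ 2
  have hzζ : (z : ℝ) = ζ * X := (div_mul_cancel₀ _ hX0.ne').symm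
  have hcγ : (c : ℝ) = γ * X ^ 2 := (div_mul_cancel₀ _ (by positivity)).symm
  have hζ0 : 0 ≤ ζ := by positivity
  have hζ : ζ ≤ r := by rw [div_le_iff₀ hX0]; linarith
  have hγ0 : 0 ≤ γ := by positivity
  have hγ : γ ≤ T * r := by rw [div_le_iff₀ (by positivity)]; linarith
  have hr : 0 ≤ r := hζ0.trans hζ
  have hTr : 0 ≤ T * r := hγ0.trans hγ
  have hγX : γ ≤ X := by rw [div_le_iff₀ (by positivity)]; linarith
  have hζlam : |ζ * lam| ≤ r * |lam| := by
    rw [abs_mul, abs_of_nonneg hζ0]; gcongr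
  rw [abs_le]
  constructor
  · have hlow := mul_le_mul_of_nonneg_left
      (mul_sub_sq_div_two_le_one_sub_one_sub_pow hP0 hP1 z) hM0
    have hexp : (X ^ 3 - c) * (z * (s / X ^ 3) - (z * (s / X ^ 3)) ^ 2 / 2)
        = ζ * X + ζ * lam - γ * ζ * s - (X - γ) * (ζ * s) ^ 2 / (2 * X ^ 2) := by
      rw [hzζ, hcγ, hs]; field_simp
    have hcross : γ * ζ * s ≤ T * r * r * (3 / 2) := by gcongr
    have hquad : (X - γ) * (ζ * s) ^ 2 / (2 * X ^ 2) ≤ r ^ 2 := by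
      rw [div_le_iff₀ (by positivity)]
      have : (ζ * s) ^ 2 ≤ (r * (3 / 2)) ^ 2 := by gcongr
      nlinarith [mul_le_mul (show X - γ ≤ X ^ 2 / 2 by nlinarith) this (sq_nonneg _) (by nlinarith)]
    linarith [(abs_le.1 hζlam).1, mul_nonneg hTr hr]
  · have hup := mul_le_mul_of_nonneg_left
      (one_sub_one_sub_pow_le_mul (p := s / X ^ 3) (by linarith) z) hM0
    have hexp : (X ^ 3 - c) * (z * (s / X ^ 3)) = ζ * X + ζ * lam - γ * ζ * s := by
      rw [hzζ, hcγ, hs]; field_simp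
    have : 0 ≤ γ * ζ * s := by positivity
    linarith [(abs_le.1 hζlam).2, mul_nonneg hTr hr, sq_nonneg r]

end Asymptotics

/-- Lemma 3.1 (fourth-moment bound). With `p n = n⁻¹ + λ n^(-4/3)`,
`q n z = 1 - (1 - p n)^z`, and
`κ n z c = E[(β(n,z,c) - z)^4] = ∑_{j=0}^{n-c} C(n-c,j) q^j (1-q)^(n-c-j) (j - z)^4`
the fourth moment of `β(n,z,c) - z` for `β(n,z,c) ~ Bin(n-c, q n z)`, there exist `K > 0`
and `N` such that for all `n ≥ N` and all `(z, c) ∈ Ω_n` (i.e. `z ≤ n^(1/3) r` and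
`c ≤ n^(2/3) T r`), `κ(n,z,c) ≤ K n^(2/3)`. -/
theorem stmt_2 (lam r T : ℝ) (hr : 0 < r) (hT : 0 < T)
    (p : ℕ → ℝ) (hp : ∀ n : ℕ, p n = (n : ℝ)⁻¹ + lam * (n : ℝ) ^ (-(4 : ℝ) / 3))
    (q : ℕ → ℕ → ℝ) (hq : ∀ (n : ℕ) (z : ℕ), q n z = 1 - (1 - p n) ^ z)
    (κ : ℕ → ℕ → ℕ → ℝ)
    (hκ : ∀ (n : ℕ) (z c : ℕ), κ n z c =
      ∑ j ∈ Finset.range (n - c + 1),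
        ((n - c).choose j : ℝ) * (q n z) ^ j * (1 - q n z) ^ (n - c - j)
          * ((j : ℝ) - (z : ℝ)) ^ 4) :
    ∃ K : ℝ, 0 < K ∧ ∃ N : ℕ, ∀ n : ℕ, N ≤ n → ∀ z c : ℕ,
      (z : ℝ) ≤ (n : ℝ) ^ ((1 : ℝ) / 3) * r →
      (c : ℝ) ≤ (n : ℝ) ^ ((2 : ℝ) / 3) * T * r →
      κ n z c ≤ K * (n : ℝ) ^ ((2 : ℝ) / 3) := by
  have hTr : 0 < T * r := mul_pos hT hr
  set D := r * |lam| + 2 * T * r ^ 2 + r ^ 2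
  set A := r + D
  have hD : 0 ≤ D := by positivity
  refine ⟨fourthMomentBound A D, by unfold fourthMomentBound; positivity,
    ⌈(2 + 2 * |lam| + T * r) ^ 3⌉₊, fun n hn z c hz hc => ?_⟩
  set X := (n : ℝ) ^ ((1 : ℝ) / 3)
  have hn3 : (n : ℝ) = X ^ 3 := by rw [← rpow_natCast_div_three n.cast_nonneg 3]; norm_num
  have hXbig : 2 + 2 * |lam| + T * r ≤ X := by
    refine le_of_pow_le_pow_left₀ three_ne_zero (by positivity) ?_
    exact hn3 ▸ (Nat.le_ceil _).trans (Nat.cast_le.2 hn)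
  have hX2 : 2 ≤ X := by linarith [abs_nonneg lam]
  have hlamX : 2 * |lam| ≤ X := by linarith
  have hn2 : (n : ℝ) ^ ((2 : ℝ) / 3) = X ^ 2 := by
    rw [← rpow_natCast_div_three n.cast_nonneg 2]; norm_num
  rw [hn2] at hc ⊢
  have hcX : (c : ℝ) ≤ X ^ 3 := hc.trans (by nlinarith [abs_nonneg lam])
  have hcn : c ≤ n := by exact_mod_cast hn3 ▸ hcX
  have hqP : q n z = 1 - (1 - (1 + lam / X) / X ^ 3) ^ z := by
    rw [hq, hp, inv_add_mul_rpow_neg_four_div_three (by rw [hn3]; positivity)]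
  have hq01 := hqP ▸ one_sub_one_sub_pow_mem_Icc (div_pow_three_mem_Icc hX2 hlamX) z
  have hd : |((n - c : ℕ) : ℝ) * q n z - z| ≤ D := by
    rw [Nat.cast_sub hcn, hqP, hn3]
    exact abs_mul_one_sub_one_sub_pow_sub_le hX2 hlamX hz hc hcX
  have hμ : ((n - c : ℕ) : ℝ) * q n z ≤ A * X := by
    linarith [(abs_le.1 hd).2, mul_le_mul_of_nonneg_left (show 1 ≤ X by linarith) hD]
  rw [hκ]
  calc _ ≤ _ := sum_choose_mul_pow_mul_sub_pow_four_le (n - c) hq01.1 hq01.2 hd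
    _ ≤ _ := fourthMomentBound_le_mul_sq (mul_nonneg (Nat.cast_nonneg _) hq01.1) hμ
      (by positivity) hD (by linarith)
end

section
/- There exist a constant K > 0 and N ∈ ℕ such that for all n ≥ N and all pairs (z,c) ∈ Ω_n^θ (i.e. z,c ∈ ℕ with z ≤ n^{1/3} θ_n² r and c ≤ n^{2/3} θ_n T r), one has |μ_θ(n,z,c) − z − n^{−1/3} z (λ θ_n − n^{−2/3} c)| ≤ K (θ_n⁴ n^{−1/3} + 1). (Lemma 6.1, mean expansion.) -/
/-!
With `b = n^(-1/3)` one has `n b³ = 1` and `p = b³ + λθb⁴`. Bernoulli's inequality to second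
order gives `1 - (1 - p)^z = zp + D` with `|D| ≤ (zp)²/2`, and `(n - c) z p` equals the claimed
main term `z + b z (λθ - b² c)` up to `-λθ z c b⁴` exactly. On `Ω_n^θ` we have `z b ≤ θ² r` and
`c b² ≤ θ T r`, so both `n (zp)²` and `λθ z c b⁴` are `O(θ⁴ b)`. Since `θ b → 0`, for large `n`
also `|λθ| b ≤ 1/2` (hence `0 ≤ p ≤ 3b³/2`) and `c ≤ n`.
-/

lemma pow_one_sub_le_one_sub_mul_add_sq {x : ℝ} (hx0 : 0 ≤ x) (hx1 : x ≤ 1) (z : ℕ) :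
    (1 - x) ^ z ≤ 1 - z * x + (z * x) ^ 2 / 2 := by
  induction z with
  | zero => simp
  | succ k ih =>
    push_cast
    rw [pow_succ]
    nlinarith [mul_le_mul_of_nonneg_right ih (sub_nonneg.2 hx1),
      mul_nonneg (sq_nonneg (k * x)) hx0]

lemma abs_one_sub_pow_sub_mul_le {x : ℝ} (hx0 : 0 ≤ x) (hx1 : x ≤ 1) (z : ℕ) :
    |1 - (1 - x) ^ z - z * x| ≤ (z * x) ^ 2 / 2 := by
  have bernoulli := one_add_mul_le_pow (a := -x) (by linarith) z
  rw [← sub_eq_add_neg, mul_neg, ← sub_eq_add_neg] at bernoulli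
  rw [abs_le]
  constructor <;> linarith [pow_one_sub_le_one_sub_mul_add_sq hx0 hx1 z]

lemma rpow_div_three_mul_pow_eq_one {x : ℝ} (hx : 0 < x) (k : ℕ) :
    x ^ ((k : ℝ) / 3) * (x ^ (-(1 : ℝ) / 3)) ^ k = 1 := by
  rw [← Real.rpow_mul_natCast hx.le, ← Real.rpow_add hx]
  ring_nf
  exact Real.rpow_zero x

lemma rpow_neg_div_three_eq_pow {x : ℝ} (hx : 0 ≤ x) (k : ℕ) :
    x ^ (-(k : ℝ) / 3) = (x ^ (-(1 : ℝ) / 3)) ^ k := by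
  rw [← Real.rpow_mul_natCast hx]
  ring_nf

lemma abs_mean_sub_expansion_le_s4 {n b ℓ c : ℝ} (z : ℕ) (hb : 0 ≤ b) (hn : 2 ≤ n)
    (hnb : n * b ^ 3 = 1) (hc0 : 0 ≤ c) (hcn : c ≤ n) (hℓ : |ℓ| * b ≤ 1 / 2) :
    |(n - c) * (1 - (1 - (b ^ 3 + ℓ * b ^ 4)) ^ z) - z - b * z * (ℓ - b ^ 2 * c)|
      ≤ (9 / 8 * (z * b) ^ 2 + |ℓ| * (z * b) * (c * b ^ 2)) * b := by
  set p := b ^ 3 + ℓ * b ^ 4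
  have hℓb : |ℓ * b| ≤ 1 / 2 := by rwa [abs_mul, abs_of_nonneg hb]
  have hp_eq : p = b ^ 3 * (1 + ℓ * b) := by ring
  have hp0 : 0 ≤ p := by
    rw [hp_eq]; exact mul_nonneg (pow_nonneg hb 3) (by linarith [neg_abs_le (ℓ * b)])
  have hp_le : p ≤ 3 / 2 * b ^ 3 := by
    rw [hp_eq]; nlinarith [le_abs_self (ℓ * b), pow_nonneg hb 3]
  have hp1 : p ≤ 1 := by nlinarith [pow_nonneg hb 3]
  have hlinear :
      (n - c) * (z * p) = z + b * z * (ℓ - b ^ 2 * c) - ℓ * (z * b) * (c * b ^ 2) * b := by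
    linear_combination (z + z * ℓ * b) * hnb
  calc _ = |(n - c) * (1 - (1 - p) ^ z - z * p) - ℓ * (z * b) * (c * b ^ 2) * b| := by
          congr 1; linear_combination hlinear
    _ ≤ |(n - c) * (1 - (1 - p) ^ z - z * p)| + |ℓ * (z * b) * (c * b ^ 2) * b| := abs_sub _ _
    _ ≤ n * ((z * p) ^ 2 / 2) + |ℓ| * (z * b) * (c * b ^ 2) * b := by
          rw [abs_mul, abs_of_nonneg (sub_nonneg.2 hcn)]
          gcongr
          · linarith
          · exact abs_one_sub_pow_sub_mul_le hp0 hp1 z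
          · simp only [abs_mul, abs_of_nonneg hb, abs_of_nonneg hc0, abs_pow, Nat.abs_cast,
              le_refl]
    _ ≤ n * ((z * (3 / 2 * b ^ 3)) ^ 2 / 2) + |ℓ| * (z * b) * (c * b ^ 2) * b := by gcongr
    _ = _ := by linear_combination (9 / 8 * z ^ 2 * b ^ 3) * hnb

lemma abs_mean_sub_expansion_le_of_window {n b t lam r T : ℝ} (z c : ℕ) (hb : 0 < b)
    (ht : 0 < t) (hn : 2 ≤ n) (hnb : n * b ^ 3 = 1)
    (hsmall : (2 * |lam| + |T * r| + 1) * (t * b) ≤ 1)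
    (hz : z * b ≤ t ^ 2 * r) (hc : c * b ^ 2 ≤ t * (T * r)) :
    |(n - c) * (1 - (1 - (b ^ 3 + lam * t * b ^ 4)) ^ z) - z - b * z * (lam * t - b ^ 2 * c)|
      ≤ (9 / 8 * r ^ 2 + |lam| * |T| * r ^ 2) * (t ^ 4 * b) := by
  have htb : 0 ≤ t * b := by positivity
  have hcn : (c : ℝ) ≤ n := by
    refine le_of_mul_le_mul_right ?_ (pow_pos hb 3)
    calc (c : ℝ) * b ^ 3 = c * b ^ 2 * b := by ring
      _ ≤ t * (T * r) * b := by gcongr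
      _ = T * r * (t * b) := by ring
      _ ≤ |T * r| * (t * b) := by gcongr; exact le_abs_self _
      _ ≤ n * b ^ 3 := by rw [hnb]; nlinarith [mul_nonneg (abs_nonneg lam) htb]
  have hℓ : |lam * t| * b ≤ 1 / 2 := by
    rw [abs_mul, abs_of_pos ht, mul_assoc]
    nlinarith [mul_nonneg (abs_nonneg (T * r)) htb]
  have hz' : z * b ≤ t ^ 2 * |r| := hz.trans (by gcongr; exact le_abs_self r)
  have hc' : c * b ^ 2 ≤ t * (|T| * |r|) :=
    hc.trans (by rw [← abs_mul]; gcongr; exact le_abs_self _)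
  calc _ ≤ (9 / 8 * (z * b) ^ 2 + |lam * t| * (z * b) * (c * b ^ 2)) * b :=
        abs_mean_sub_expansion_le_s4 z hb.le hn hnb (Nat.cast_nonneg c) hcn hℓ
    _ ≤ (9 / 8 * (t ^ 2 * |r|) ^ 2 + |lam * t| * (t ^ 2 * |r|) * (t * (|T| * |r|))) * b := by
        gcongr
    _ = _ := by
        rw [abs_mul, abs_of_pos ht]
        linear_combination (9 / 8 + |lam| * |T|) * t ^ 4 * b * sq_abs r

lemma abs_mean_sub_expansion_le_of_window_rpow {x t lam r T : ℝ} (z c : ℕ) (hx : 2 ≤ x)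
    (ht : 0 < t) (hsmall : (2 * |lam| + |T * r| + 1) * (t * x ^ (-(1 : ℝ) / 3)) ≤ 1)
    (hz : (z : ℝ) ≤ x ^ ((1 : ℝ) / 3) * t ^ 2 * r)
    (hc : (c : ℝ) ≤ x ^ ((2 : ℝ) / 3) * t * T * r) :
    |(x - c) * (1 - (1 - (x⁻¹ + lam * t * x ^ (-(4 : ℝ) / 3))) ^ z) - z
        - x ^ (-(1 : ℝ) / 3) * z * (lam * t - x ^ (-(2 : ℝ) / 3) * c)|
      ≤ (9 / 8 * r ^ 2 + |lam| * |T| * r ^ 2) * (t ^ 4 * x ^ (-(1 : ℝ) / 3)) := by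
  have hx0 : 0 < x := by linarith
  set b := x ^ (-(1 : ℝ) / 3)
  have hb1 : x ^ ((1 : ℝ) / 3) * b = 1 := by simpa using rpow_div_three_mul_pow_eq_one hx0 1
  have hb2 : x ^ ((2 : ℝ) / 3) * b ^ 2 = 1 := by simpa using rpow_div_three_mul_pow_eq_one hx0 2
  have hb3 : x * b ^ 3 = 1 := by simpa using rpow_div_three_mul_pow_eq_one hx0 3
  have hm2 : x ^ (-(2 : ℝ) / 3) = b ^ 2 := by simpa using rpow_neg_div_three_eq_pow hx0.le 2
  have hm4 : x ^ (-(4 : ℝ) / 3) = b ^ 4 := by simpa using rpow_neg_div_three_eq_pow hx0.le 4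
  rw [hm2, hm4, ← eq_inv_of_mul_eq_one_right hb3]
  refine abs_mean_sub_expansion_le_of_window z c (by positivity) ht hx hb3 hsmall ?_ ?_
  · calc (z : ℝ) * b ≤ x ^ ((1 : ℝ) / 3) * t ^ 2 * r * b := by gcongr
      _ = t ^ 2 * r := by linear_combination t ^ 2 * r * hb1
  · calc (c : ℝ) * b ^ 2 ≤ x ^ ((2 : ℝ) / 3) * t * T * r * b ^ 2 := by gcongr
      _ = t * (T * r) := by linear_combination t * T * r * hb2

theorem stmt_4_general (lam r T : ℝ)
    (θ : ℕ → ℝ) (hθpos : ∀ n, 0 < θ n)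
    (hθ_small : Filter.Tendsto (fun n : ℕ => θ n * (n : ℝ) ^ (-(1 : ℝ) / 3))
      Filter.atTop (nhds 0))
    (p : ℕ → ℝ) (hp : ∀ n : ℕ, p n = (n : ℝ)⁻¹ + lam * θ n * (n : ℝ) ^ (-(4 : ℝ) / 3))
    (q : ℕ → ℕ → ℝ) (hq : ∀ (n : ℕ) (z : ℕ), q n z = 1 - (1 - p n) ^ z)
    (μ : ℕ → ℕ → ℕ → ℝ)
    (hμ : ∀ (n : ℕ) (z c : ℕ), μ n z c = ((n : ℝ) - (c : ℝ)) * q n z) :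
    ∃ K : ℝ, 0 < K ∧ ∃ N : ℕ, ∀ n : ℕ, N ≤ n → ∀ z c : ℕ,
      (z : ℝ) ≤ (n : ℝ) ^ ((1 : ℝ) / 3) * (θ n) ^ 2 * r →
      (c : ℝ) ≤ (n : ℝ) ^ ((2 : ℝ) / 3) * θ n * T * r →
      |μ n z c - (z : ℝ)
          - (n : ℝ) ^ (-(1 : ℝ) / 3) * (z : ℝ)
            * (lam * θ n - (n : ℝ) ^ (-(2 : ℝ) / 3) * (c : ℝ))|
        ≤ K * ((θ n) ^ 4 * (n : ℝ) ^ (-(1 : ℝ) / 3) + 1) := by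
  obtain ⟨N, hN⟩ := Filter.eventually_atTop.1
    ((hθ_small.const_mul (2 * |lam| + |T * r| + 1)).eventually_lt_const
      (by simp : (2 * |lam| + |T * r| + 1) * (0 : ℝ) < 1))
  refine ⟨9 / 8 * r ^ 2 + |lam| * |T| * r ^ 2 + 1, by positivity, max N 2,
    fun n hn z c hz hc => ?_⟩
  have hn2 : (2 : ℝ) ≤ n := by exact_mod_cast le_of_max_le_right hn
  rw [hμ, hq, hp]
  calc _ ≤ (9 / 8 * r ^ 2 + |lam| * |T| * r ^ 2) * (θ n ^ 4 * (n : ℝ) ^ (-(1 : ℝ) / 3)) :=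
        abs_mean_sub_expansion_le_of_window_rpow z c hn2 (hθpos n)
          (hN n (le_of_max_le_left hn)).le hz hc
    _ ≤ _ := mul_le_mul (by linarith) (by linarith) (by positivity) (by positivity)

/-- Lemma 6.1 (mean expansion). Let `θ n > 0`, `θ n → ∞`, `θ n = o(n^(1/3))`. With
`p n = n⁻¹ + λ θ n * n^(-4/3)`, `q n z = 1 - (1 - p n)^z` and mean
`μ n z c = (n - c) * q n z` of `Bin(n - c, q n z)`, there exist `K > 0` and `N` such
that for all `n ≥ N` and all `(z, c) ∈ Ω_n^θ` (i.e. `z ≤ n^(1/3) θ_n² r` and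
`c ≤ n^(2/3) θ_n T r`),
`|μ(n,z,c) - z - n^(-1/3) z (λ θ_n - n^(-2/3) c)| ≤ K (θ_n⁴ n^(-1/3) + 1)`. -/
theorem stmt_4 (lam r T : ℝ) (hr : 0 < r) (hT : 0 < T)
    (θ : ℕ → ℝ) (hθpos : ∀ n, 0 < θ n)
    (hθ_top : Filter.Tendsto θ Filter.atTop Filter.atTop)
    (hθ_small : Filter.Tendsto (fun n : ℕ => θ n * (n : ℝ) ^ (-(1 : ℝ) / 3))
      Filter.atTop (nhds 0))
    (p : ℕ → ℝ) (hp : ∀ n : ℕ, p n = (n : ℝ)⁻¹ + lam * θ n * (n : ℝ) ^ (-(4 : ℝ) / 3))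
    (q : ℕ → ℕ → ℝ) (hq : ∀ (n : ℕ) (z : ℕ), q n z = 1 - (1 - p n) ^ z)
    (μ : ℕ → ℕ → ℕ → ℝ)
    (hμ : ∀ (n : ℕ) (z c : ℕ), μ n z c = ((n : ℝ) - (c : ℝ)) * q n z) :
    ∃ K : ℝ, 0 < K ∧ ∃ N : ℕ, ∀ n : ℕ, N ≤ n → ∀ z c : ℕ,
      (z : ℝ) ≤ (n : ℝ) ^ ((1 : ℝ) / 3) * (θ n) ^ 2 * r →
      (c : ℝ) ≤ (n : ℝ) ^ ((2 : ℝ) / 3) * θ n * T * r →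
      |μ n z c - (z : ℝ)
          - (n : ℝ) ^ (-(1 : ℝ) / 3) * (z : ℝ)
            * (lam * θ n - (n : ℝ) ^ (-(2 : ℝ) / 3) * (c : ℝ))|
        ≤ K * ((θ n) ^ 4 * (n : ℝ) ^ (-(1 : ℝ) / 3) + 1) :=
  stmt_4_general lam r T θ hθpos hθ_small p hp q hq μ hμ
end

section
/- Define z(t) = f(c(t)) for t ≥ 0. Then z is continuous and nonnegative, c(t) = ∫₀^t z(s) ds for every t ≥ 0, and consequently z satisfies the deterministic Lamperti-type equation z(t) = f( ∫₀^t z(s) ds ) for all t ≥ 0, i.e. z(t) = x + λ ∫₀^t z(s) ds − (1/2)(∫₀^t z(s) ds)². (Explicit solution of the limit equation in Lemma 6.0 / equation (6.2).) -/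
/-- The real inverse hyperbolic tangent, `artanh y = (1/2) log((1+y)/(1-y))`. -/
noncomputable def Real.artanhLog (y : ℝ) : ℝ := (1 / 2) * Real.log ((1 + y) / (1 - y))

/-!
With `a = √(2x + λ²)` one has `f (λ + a y) = (a²/2)(1 - y²)`, and `tanh' = 1 - tanh²`; hence
`c t = λ + a tanh (a t / 2 + θ)` solves `c' = f ∘ c = z`, and `z = (a²/2)(1 - tanh²) ≥ 0`.
The phase `θ = artanh (-λ/a)` is chosen so that `c 0 = 0`, so the fundamental theorem of
calculus gives `c t = ∫₀ᵗ z`.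
-/

namespace Real

theorem hasDerivAt_tanh (u : ℝ) : HasDerivAt tanh (1 - tanh u ^ 2) u := by
  have h := (hasDerivAt_sinh u).div (hasDerivAt_cosh u) (cosh_pos u).ne'
  rw [show sinh / cosh = tanh from funext fun v => (tanh_eq_sinh_div_cosh v).symm] at h
  refine h.congr_deriv ?_
  rw [tanh_eq_sinh_div_cosh]
  field_simp

theorem one_sub_tanh_sq_pos (u : ℝ) : 0 < 1 - tanh u ^ 2 := by
  nlinarith [tanh_lt_one u, neg_one_lt_tanh u]

theorem artanhLog_eq_artanh {y : ℝ} (hy : y ∈ Set.Icc (-1) 1) : artanhLog y = artanh y :=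
  (artanh_eq_half_log hy).symm

theorem tanh_artanhLog {y : ℝ} (hy : y ∈ Set.Ioo (-1) 1) : tanh (artanhLog y) = y := by
  rw [artanhLog_eq_artanh (Set.Ioo_subset_Icc_self hy), tanh_artanh hy]

end Real

section Logistic

variable {x lam a : ℝ}

theorem quadratic_lam_add_mul (ha : a ^ 2 = 2 * x + lam ^ 2) (y : ℝ) :
    x + lam * (lam + a * y) - (lam + a * y) ^ 2 / 2 = a ^ 2 / 2 * (1 - y ^ 2) := by
  linear_combination (-1 / 2 : ℝ) * ha

theorem hasDerivAt_lam_add_mul_tanh (θ t : ℝ) :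
    HasDerivAt (fun t => lam + a * Real.tanh (a / 2 * t + θ))
      (a ^ 2 / 2 * (1 - Real.tanh (a / 2 * t + θ) ^ 2)) t := by
  have hlin : HasDerivAt (fun t : ℝ => a / 2 * t + θ) (a / 2) t := by
    simpa using ((hasDerivAt_id t).const_mul (a / 2)).add_const θ
  refine ((((Real.hasDerivAt_tanh _).comp t hlin).const_mul a).const_add lam).congr_deriv ?_
  ring

end Logistic

/-- Explicit solution of the limit equation in Lemma 6.0 / equation (6.2). With
`f u = x + λ u - u²/2`,
`c t = λ + √(2x+λ²) tanh(√(2x+λ²)/2 · t + artanh(-λ/√(2x+λ²)))` and `z t = f (c t)`: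
`z` is continuous and nonnegative on `[0,∞)`, `c t = ∫₀^t z(s) ds` for all `t ≥ 0`,
and `z` satisfies the deterministic Lamperti-type equation
`z t = x + λ ∫₀^t z(s) ds - (1/2) (∫₀^t z(s) ds)²` for all `t ≥ 0`. -/
theorem stmt_11 (x lam : ℝ) (hx : 0 < x)
    (f : ℝ → ℝ) (hf : ∀ u : ℝ, f u = x + lam * u - u ^ 2 / 2)
    (c : ℝ → ℝ)
    (hc : ∀ t : ℝ, c t = lam + Real.sqrt (2 * x + lam ^ 2) *
      Real.tanh (Real.sqrt (2 * x + lam ^ 2) / 2 * t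
        + Real.artanhLog (-lam / Real.sqrt (2 * x + lam ^ 2))))
    (z : ℝ → ℝ) (hz : ∀ t : ℝ, z t = f (c t)) :
    ContinuousOn z (Set.Ici 0) ∧
      (∀ t : ℝ, 0 ≤ t → 0 ≤ z t) ∧
      (∀ t : ℝ, 0 ≤ t → c t = ∫ s in (0 : ℝ)..t, z s) ∧
      (∀ t : ℝ, 0 ≤ t →
        z t = x + lam * (∫ s in (0 : ℝ)..t, z s)
          - (1 / 2) * (∫ s in (0 : ℝ)..t, z s) ^ 2) := by
  set a := Real.sqrt (2 * x + lam ^ 2)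
  set θ := Real.artanhLog (-lam / a)
  have hpos : 0 < 2 * x + lam ^ 2 := by positivity
  have ha : 0 < a := Real.sqrt_pos.2 hpos
  have ha2 : a ^ 2 = 2 * x + lam ^ 2 := Real.sq_sqrt hpos.le
  have hzc : ∀ t, z t = x + lam * c t - c t ^ 2 / 2 := fun t => by rw [hz, hf]
  have hz_tanh : ∀ t, z t = a ^ 2 / 2 * (1 - Real.tanh (a / 2 * t + θ) ^ 2) := fun t => by
    rw [hzc, hc, quadratic_lam_add_mul ha2]
  have hderiv : ∀ t, HasDerivAt c (z t) t := fun t => by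
    rw [funext hc, hz_tanh]
    exact hasDerivAt_lam_add_mul_tanh θ t
  have hcont_c : Continuous c := continuous_iff_continuousAt.2 fun t => (hderiv t).continuousAt
  have hcont_z : Continuous z := by
    rw [funext hzc]
    fun_prop
  have hphase : -lam / a ∈ Set.Ioo (-1) 1 := by
    have hlam : |lam| < a := (Real.lt_sqrt (abs_nonneg lam)).2 (by rw [sq_abs]; linarith)
    rw [Set.mem_Ioo, ← abs_lt, abs_div, abs_neg, abs_of_pos ha]
    exact (div_lt_one ha).2 hlam
  have hc0 : c 0 = 0 := by
    rw [hc, mul_zero, zero_add, Real.tanh_artanhLog hphase]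
    field_simp
    ring
  have hint : ∀ t, c t = ∫ s in (0 : ℝ)..t, z s := fun t => by
    rw [intervalIntegral.integral_eq_sub_of_hasDerivAt (fun s _ => hderiv s)
      (hcont_z.intervalIntegrable 0 t), hc0, sub_zero]
  refine ⟨hcont_z.continuousOn, fun t _ => ?_, fun t _ => hint t, fun t _ => ?_⟩
  · rw [hz_tanh]
    have := Real.one_sub_tanh_sq_pos (a / 2 * t + θ)
    positivity
  · rw [← hint t, hzc]
    ring
end

section
/- For every x > 0, almost surely ∫₀^{T} du / (x + B(u)) < ∞, where T = inf{t ≥ 0 : x + B(t) = 0} is the first hitting time of 0 by x + B (which is almost surely finite). (The Brownian-motion case of the integrability claim in the proof of Lemma 4.4.) -/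
/-!
Let `p = P(N(0, 1) ≤ -2)`. If `x + B u ≤ a`, then with probability `p`, independently of the
past, the increment of `B` over `[u, u + a²]` is at most `-2a`, which pushes `x + B` below zero.
Along a sequence of times growing fast enough that the Gaussian tail terms vanish, the probability
of staying positive therefore decays geometrically, so `x + B` hits zero almost surely.

For the integral, `1 / y ≤ 1 + ∑ₙ 2ⁿ⁺¹ 1{y ≤ 2⁻ⁿ}`, so it suffices that the time `x + B` spends
below level `a` before hitting zero has expectation `O(a²)`. By the same independence, that time
is at most `1 / p` times the expected time spent there followed by such a drop, and pathwise all
those times lie in one interval of length `a²`. Hence the bound has expectation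
`∑ₙ 2ⁿ⁺¹ 4⁻ⁿ / p < ∞`.
-/

open MeasureTheory

/-- `B` is a standard Brownian motion on the probability space `(Ω, P)`: each `B t` is
measurable, sample paths are a.s. continuous, `B 0 = 0` a.s., and for `0 ≤ s ≤ t` the
increment `B t - B s` is Gaussian with mean `0` and variance `t - s`, independent of
`σ(B u : 0 ≤ u ≤ s)`. -/
structure IsStandardBrownianMotion {Ω : Type*} [MeasurableSpace Ω]
    (P : Measure Ω) (B : ℝ → Ω → ℝ) : Prop where
  measurable : ∀ t : ℝ, Measurable (B t)
  cont : ∀ᵐ ω ∂P, Continuous fun t : ℝ => B t ω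
  init : ∀ᵐ ω ∂P, B 0 ω = 0
  gauss_incr : ∀ s t : ℝ, 0 ≤ s → s ≤ t →
    Measure.map (fun ω => B t ω - B s ω) P
      = ProbabilityTheory.gaussianReal 0 (t - s).toNNReal
  indep_incr : ∀ s t : ℝ, 0 ≤ s → s ≤ t →
    ProbabilityTheory.Indep
      (MeasurableSpace.comap (fun ω => B t ω - B s ω) (borel ℝ))
      (⨆ u ∈ Set.Icc (0 : ℝ) s, MeasurableSpace.comap (B u) (borel ℝ)) P

open Filter Set ProbabilityTheory
open scoped ENNReal Topology

noncomputable section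

def dyadicFloor (n : ℕ) (t : ℝ) : ℚ := ⌊t * 2 ^ n⌋ / 2 ^ n

lemma dyadicFloor_eq (n : ℕ) (t : ℝ) : (dyadicFloor n t : ℝ) = ⌊t * 2 ^ n⌋ / 2 ^ n := by
  simp [dyadicFloor]

lemma dyadicFloor_le (n : ℕ) (t : ℝ) : (dyadicFloor n t : ℝ) ≤ t := by
  rw [dyadicFloor_eq, div_le_iff₀ (by positivity)]
  exact Int.floor_le _

lemma dyadicFloor_nonneg (n : ℕ) {t : ℝ} (ht : 0 ≤ t) : 0 ≤ (dyadicFloor n t : ℝ) := by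
  rw [dyadicFloor_eq]
  exact div_nonneg (mod_cast Int.floor_nonneg.mpr (by positivity)) (by positivity)

lemma measurable_dyadicFloor (n : ℕ) : Measurable (dyadicFloor n) :=
  (measurable_from_top (f := fun k : ℤ => (k : ℚ) / 2 ^ n)).comp
    (Int.measurable_floor.comp (measurable_id.mul_const _))

lemma tendsto_dyadicFloor (t : ℝ) : Tendsto (fun n => (dyadicFloor n t : ℝ)) atTop (𝓝 t) := by
  have hlow : ∀ n : ℕ, t - 2⁻¹ ^ n ≤ dyadicFloor n t := fun n => by
    rw [dyadicFloor_eq, le_div_iff₀ (by positivity), sub_mul, inv_pow,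
      inv_mul_cancel₀ (by positivity)]
    exact (Int.sub_one_lt_floor _).le
  have h : Tendsto (fun n : ℕ => t - 2⁻¹ ^ n) atTop (𝓝 t) := by
    simpa using tendsto_const_nhds.sub
      (tendsto_pow_atTop_nhds_zero_of_lt_one (by norm_num : (0 : ℝ) ≤ 2⁻¹) (by norm_num))
  exact tendsto_of_tendsto_of_tendsto_of_le_of_le h tendsto_const_nhds hlow (dyadicFloor_le · t)

lemma nonneg_of_forall_rat_pos {f : ℝ → ℝ} (hf : Continuous f) {u : ℝ}
    (hpos : ∀ q : ℚ, 0 ≤ (q : ℝ) → (q : ℝ) ≤ u → 0 < f q) {s : ℝ} (hs : s ∈ Icc 0 u) :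
    0 ≤ f s :=
  ge_of_tendsto ((hf.tendsto s).comp (tendsto_dyadicFloor s)) <| Eventually.of_forall fun n =>
    (hpos _ (dyadicFloor_nonneg n hs.1) ((dyadicFloor_le n s).trans hs.2)).le

lemma pos_of_lt_sInf_zeros {f : ℝ → ℝ} (hf : Continuous f) (h0 : 0 < f 0) {u : ℝ}
    (hu : 0 ≤ u) (huT : u < sInf {t | 0 ≤ t ∧ f t = 0}) : 0 < f u := by
  by_contra! hfu
  obtain ⟨t, ht, hft⟩ := intermediate_value_Icc' hu hf.continuousOn ⟨hfu, h0.le⟩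
  have hTt : sInf {t | 0 ≤ t ∧ f t = 0} ≤ t := csInf_le ⟨0, fun _ hs => hs.1⟩ ⟨ht.1, hft⟩
  linarith [ht.2]

/-- Such a set lies in `[V - c, V]`, where `V` is the first time `f` is negative. -/
lemma volume_le_of_nonneg_before_neg_after {f : ℝ → ℝ} {c : ℝ} {U : Set ℝ}
    (hU : ∀ u ∈ U, 0 ≤ u + c ∧ (∀ s ∈ Icc 0 u, 0 ≤ f s) ∧ f (u + c) < 0) :
    volume U ≤ ENNReal.ofReal c := by
  set V := sInf {t | 0 ≤ t ∧ f t < 0}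
  have hUV : U ⊆ Icc (V - c) V := fun u hu => by
    obtain ⟨hc0, hnonneg, hneg⟩ := hU u hu
    have hV : V ≤ u + c := csInf_le ⟨0, fun _ ht => ht.1⟩ ⟨hc0, hneg⟩
    have hVu : u ≤ V := le_csInf ⟨u + c, hc0, hneg⟩ fun t ⟨ht0, htneg⟩ => by
      by_contra! htu
      exact (hnonneg t ⟨ht0, htu.le⟩).not_gt htneg
    constructor <;> linarith
  calc volume U ≤ volume (Icc (V - c) V) := measure_mono hUV
    _ = ENNReal.ofReal c := by rw [Real.volume_Icc, sub_sub_cancel]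

lemma ofReal_one_div_le_one_add_tsum {y : ℝ} (hy : 0 < y) {s : ℕ → ℝ≥0∞}
    (hs : ∀ n, y ≤ 2⁻¹ ^ n → 1 ≤ s n) :
    ENNReal.ofReal (1 / y) ≤ 1 + ∑' n, 2 ^ (n + 1) * s n := by
  rcases lt_or_ge 1 y with hy1 | hy1
  · exact (ENNReal.ofReal_le_one.mpr ((div_le_one hy).mpr hy1.le)).trans le_self_add
  obtain ⟨n, hn, hn'⟩ := exists_nat_pow_near (one_le_one_div hy hy1) one_lt_two
  have hyn : y ≤ 2⁻¹ ^ n := by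
    rwa [inv_pow, le_inv_comm₀ hy (by positivity), ← one_div]
  calc ENNReal.ofReal (1 / y) ≤ ENNReal.ofReal (2 ^ (n + 1)) := ENNReal.ofReal_le_ofReal hn'.le
    _ = 2 ^ (n + 1) * 1 := by simp [ENNReal.ofReal_pow]
    _ ≤ 2 ^ (n + 1) * s n := by gcongr; exact hs n hyn
    _ ≤ ∑' n, 2 ^ (n + 1) * s n := ENNReal.le_tsum n
    _ ≤ 1 + ∑' n, 2 ^ (n + 1) * s n := le_add_self

lemma setLIntegral_Ioo_ofReal_one_div_le {f : ℝ → ℝ} {T : ℝ} {J : ℕ → Set ℝ}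
    (hJ : ∀ n, MeasurableSet (J n))
    (hf : ∀ u ∈ Ioo 0 T, 0 < f u ∧ ∀ n, f u ≤ 2⁻¹ ^ n → u ∈ J n) :
    ∫⁻ u in Ioo 0 T, ENNReal.ofReal (1 / f u)
      ≤ ENNReal.ofReal T + ∑' n, 2 ^ (n + 1) * volume.restrict (Ioi 0) (J n) := by
  calc ∫⁻ u in Ioo 0 T, ENNReal.ofReal (1 / f u)
      ≤ ∫⁻ u in Ioo 0 T, (1 + ∑' n, 2 ^ (n + 1) * (J n).indicator 1 u) :=
        setLIntegral_mono' measurableSet_Ioo fun u hu =>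
          ofReal_one_div_le_one_add_tsum (hf u hu).1 fun n hn => by
            simp [indicator_of_mem ((hf u hu).2 n hn)]
    _ = ENNReal.ofReal T + ∑' n, 2 ^ (n + 1) * volume.restrict (Ioo 0 T) (J n) := by
        rw [lintegral_add_left measurable_const, setLIntegral_one, Real.volume_Ioo, sub_zero,
          lintegral_tsum fun n => ((measurable_one.indicator (hJ n)).const_mul _).aemeasurable]
        congr 1
        refine tsum_congr fun n => ?_
        rw [lintegral_const_mul _ (measurable_one.indicator (hJ n)), lintegral_indicator_one (hJ n)]
    _ ≤ ENNReal.ofReal T + ∑' n, 2 ^ (n + 1) * volume.restrict (Ioi 0) (J n) := by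
        gcongr
        exact Ioo_subset_Ioi_self

lemma ENNReal.eq_zero_of_tendsto_of_le_add_mul {g δ : ℕ → ℝ≥0∞} {L c : ℝ≥0∞}
    (hg : Tendsto g atTop (𝓝 L)) (hδ : Tendsto δ atTop (𝓝 0)) (hL : L ≠ ⊤) (hc : c < 1)
    (hrec : ∀ n, g (n + 1) ≤ δ n + g n * c) : L = 0 := by
  have hLc : L ≤ 0 + L * c := le_of_tendsto_of_tendsto' (hg.comp (tendsto_add_atTop_nat 1))
    (hδ.add (ENNReal.Tendsto.mul_const hg (Or.inr hc.ne_top))) hrec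
  by_contra hL0
  have hlt : c * L < 1 * L := ENNReal.mul_lt_mul_left hL0 hL hc
  rw [zero_add, mul_comm] at hLc
  exact (hLc.trans_lt hlt).ne (one_mul L).symm

lemma tendsto_measure_Ioi_natCast_atTop (μ : Measure ℝ) [IsFiniteMeasure μ] :
    Tendsto (fun n : ℕ => μ (Ioi n)) atTop (𝓝 0) := by
  have hempty : ⋂ n : ℕ, Ioi (n : ℝ) = ∅ :=
    iInter_eq_empty_iff.mpr fun y => (exists_nat_ge y).imp fun _ hn => not_lt.mpr hn
  have h := tendsto_measure_iInter_atTop (μ := μ)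
    (fun n => measurableSet_Ioi.nullMeasurableSet)
    (fun _ _ hmn => Ioi_subset_Ioi (Nat.cast_le.mpr hmn)) ⟨0, measure_ne_top _ _⟩
  rwa [hempty, measure_empty] at h

def gaussianDropProb : ℝ≥0∞ := gaussianReal 0 1 (Iic (-2))

lemma gaussianDropProb_pos : 0 < gaussianDropProb := by
  refine pos_iff_ne_zero.mpr fun h => ?_
  have := gaussianReal_absolutelyContinuous' 0 one_ne_zero h
  simp [Real.volume_Iic] at this

lemma gaussianDropProb_le_one : gaussianDropProb ≤ 1 := prob_le_one

/-- The level `aₙ = x + n √(checkTime x n)` lies `n` standard deviations above `x`, so `x + B`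
rarely exceeds it at time `checkTime x n`; over the next `aₙ²` time units a drop by `2 aₙ`, which
forces `x + B` below zero, has the fixed probability `gaussianDropProb`. -/
def checkTime (x : ℝ) : ℕ → ℝ
  | 0 => 1
  | n + 1 => checkTime x n + (x + n * √(checkTime x n)) ^ 2

lemma monotone_checkTime (x : ℝ) : Monotone (checkTime x) :=
  monotone_nat_of_le_succ fun _ => le_add_of_nonneg_right (sq_nonneg _)

lemma one_le_checkTime (x : ℝ) (n : ℕ) : 1 ≤ checkTime x n :=
  monotone_checkTime x (Nat.zero_le n)

section Paths

variable {Ω : Type*}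

/-- Equal to `B t ω` whenever the path of `ω` is continuous, but jointly measurable in `(t, ω)`
and, for `t ≥ 0`, measurable with respect to `σ(B u : 0 ≤ u ≤ t)`. -/
def dyadicLimsup (B : ℝ → Ω → ℝ) (t : ℝ) (ω : Ω) : ℝ :=
  limsup (fun n => B (dyadicFloor n t) ω) atTop

lemma dyadicLimsup_eq {B : ℝ → Ω → ℝ} {ω : Ω} (hc : Continuous fun t => B t ω) (t : ℝ) :
    dyadicLimsup B t ω = B t ω :=
  ((hc.tendsto t).comp (tendsto_dyadicFloor t)).limsup_eq

abbrev pastMeasurableSpace (B : ℝ → Ω → ℝ) (s : ℝ) : MeasurableSpace Ω :=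
  ⨆ u ∈ Icc (0 : ℝ) s, MeasurableSpace.comap (B u) (borel ℝ)

lemma measurable_past {B : ℝ → Ω → ℝ} {s u : ℝ} (hu : u ∈ Icc 0 s) :
    Measurable[pastMeasurableSpace B s] (B u) := by
  intro A hA
  exact le_iSup₂ (f := fun u (_ : u ∈ Icc (0 : ℝ) s) =>
    MeasurableSpace.comap (B u) (borel ℝ)) u hu _ ⟨_, hA, rfl⟩

lemma measurable_past_dyadicLimsup {B : ℝ → Ω → ℝ} {s : ℝ} (hs : 0 ≤ s) :
    Measurable[pastMeasurableSpace B s] (dyadicLimsup B s) := by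
  exact Measurable.limsup fun n => measurable_past ⟨dyadicFloor_nonneg n hs, dyadicFloor_le n s⟩

/-- Positivity is only tested at rational times, which makes the event measurable; for a
continuous path it still gives `0 ≤ x + B s` on `[0, u]`. -/
def positiveOnRatUpTo (B : ℝ → Ω → ℝ) (x u : ℝ) : Set Ω :=
  {ω | ∀ q : ℚ, 0 ≤ (q : ℝ) → (q : ℝ) ≤ u → 0 < x + B q ω}

lemma positiveOnRatUpTo_anti (B : ℝ → Ω → ℝ) (x : ℝ) : Antitone (positiveOnRatUpTo B x) :=
  fun _ _ huv _ hω q hq0 hqu => hω q hq0 (hqu.trans huv)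

lemma nonneg_of_mem_positiveOnRatUpTo {B : ℝ → Ω → ℝ} {x u : ℝ} {ω : Ω}
    (hc : Continuous fun t => B t ω) (hω : ω ∈ positiveOnRatUpTo B x u) {s : ℝ}
    (hs : s ∈ Icc 0 u) : 0 ≤ x + B s ω :=
  nonneg_of_forall_rat_pos (continuous_const.add hc) hω hs

lemma measurableSet_past_positiveOnRatUpTo (B : ℝ → Ω → ℝ) (x u : ℝ) :
    MeasurableSet[pastMeasurableSpace B u] (positiveOnRatUpTo B x u) := by
  have hset : positiveOnRatUpTo B x u = ⋂ q : ℚ, ⋂ (_ : (q : ℝ) ∈ Icc 0 u), B q ⁻¹' Ioi (-x) := by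
    ext ω
    simp [positiveOnRatUpTo, neg_lt_iff_pos_add']
  rw [hset]
  exact MeasurableSet.iInter fun q => MeasurableSet.iInter fun hq =>
    measurable_past hq measurableSet_Ioi

def lowBeforeHit (B : ℝ → Ω → ℝ) (x a : ℝ) : Set (ℝ × Ω) :=
  {p | p.2 ∈ positiveOnRatUpTo B x p.1 ∧ x + dyadicLimsup B p.1 p.2 ≤ a}

def dropAfter (B : ℝ → Ω → ℝ) (a : ℝ) : Set (ℝ × Ω) :=
  {p | dyadicLimsup B (p.1 + a ^ 2) p.2 - dyadicLimsup B p.1 p.2 ≤ -(2 * a)}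

lemma mem_lowBeforeHit {B : ℝ → Ω → ℝ} {x u a : ℝ} {ω : Ω} (hc : Continuous fun t => B t ω)
    (hpos : ∀ s ∈ Icc 0 u, 0 < x + B s ω) (hle : x + B u ω ≤ a) :
    (u, ω) ∈ lowBeforeHit B x a :=
  ⟨fun q hq0 hqu => hpos q ⟨hq0, hqu⟩, by rwa [dyadicLimsup_eq hc]⟩

lemma volume_slice_lowBeforeHit_inter_dropAfter_le {B : ℝ → Ω → ℝ} {x a : ℝ} {ω : Ω}
    (hc : Continuous fun t => B t ω) (ha : 0 < a) :
    volume.restrict (Ioi 0) ((·, ω) ⁻¹' (lowBeforeHit B x a ∩ dropAfter B a))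
      ≤ ENNReal.ofReal (a ^ 2) := by
  rw [Measure.restrict_apply' measurableSet_Ioi]
  refine volume_le_of_nonneg_before_neg_after (f := fun t => x + B t ω) ?_
  rintro u ⟨⟨⟨hpos, hlow⟩, hdrop⟩, hu⟩
  change _ ≤ (_ : ℝ) at hdrop
  simp only [dyadicLimsup_eq hc] at hlow hdrop
  exact ⟨by positivity [hu.out.le], fun s hs => nonneg_of_mem_positiveOnRatUpTo hc hpos hs,
    by linarith⟩

end Paths

variable {Ω : Type*} [MeasurableSpace Ω]

lemma measurable_dyadicLimsup {B : ℝ → Ω → ℝ} (hm : ∀ t, Measurable (B t)) :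
    Measurable fun p : ℝ × Ω => dyadicLimsup B p.1 p.2 := by
  refine Measurable.limsup fun n => ?_
  have hBq : Measurable fun p : Ω × ℚ => B p.2 p.1 :=
    measurable_from_prod_countable_left fun q => hm q
  exact hBq.comp (measurable_snd.prodMk ((measurable_dyadicFloor n).comp measurable_fst))

lemma pastMeasurableSpace_le {B : ℝ → Ω → ℝ} (hm : ∀ t, Measurable (B t)) (s : ℝ) :
    pastMeasurableSpace B s ≤ ‹MeasurableSpace Ω› :=
  iSup₂_le fun u _ => (hm u).comap_le

lemma measurableSet_positiveOnRatUpTo_prod {B : ℝ → Ω → ℝ} (hm : ∀ t, Measurable (B t))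
    (x : ℝ) : MeasurableSet {p : ℝ × Ω | p.2 ∈ positiveOnRatUpTo B x p.1} :=
  measurableSet_setOfPred.mpr <| Measurable.forall fun q => measurable_const.imp <|
    (measurableSet_setOfPred.mp (measurableSet_le measurable_const measurable_fst)).imp
      (measurableSet_setOfPred.mp (measurableSet_lt measurable_const
        (((hm q).comp measurable_snd).const_add x)))

lemma measurableSet_lowBeforeHit {B : ℝ → Ω → ℝ} (hm : ∀ t, Measurable (B t)) (x a : ℝ) :
    MeasurableSet (lowBeforeHit B x a) :=
  (measurableSet_positiveOnRatUpTo_prod hm x).inter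
    (measurableSet_le ((measurable_dyadicLimsup hm).const_add x) measurable_const)

lemma measurableSet_dropAfter {B : ℝ → Ω → ℝ} (hm : ∀ t, Measurable (B t)) (a : ℝ) :
    MeasurableSet (dropAfter B a) :=
  measurableSet_le (((measurable_dyadicLimsup hm).comp
    ((measurable_fst.add_const _).prodMk measurable_snd)).sub (measurable_dyadicLimsup hm))
    measurable_const

namespace IsStandardBrownianMotion

variable {P : Measure Ω} {B : ℝ → Ω → ℝ}

lemma measurable_increment (hB : IsStandardBrownianMotion P B) (s t : ℝ) :
    Measurable fun ω => B t ω - B s ω :=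
  (hB.measurable t).sub (hB.measurable s)

lemma map_increment_div (hB : IsStandardBrownianMotion P B) {s σ : ℝ} (hs : 0 ≤ s)
    (hσ : 0 < σ) : P.map (fun ω => (B (s + σ ^ 2) ω - B s ω) / σ) = gaussianReal 0 1 := by
  have hlaw := hB.gauss_incr s (s + σ ^ 2) hs (le_add_of_nonneg_right (sq_nonneg σ))
  have hscale : P.map (fun ω => (B (s + σ ^ 2) ω - B s ω) / σ)
      = (P.map fun ω => B (s + σ ^ 2) ω - B s ω).map (σ⁻¹ * ·) := by
    rw [Measure.map_map (measurable_const_mul _) (hB.measurable_increment _ _)]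
    simp only [Function.comp_def, div_eq_inv_mul]
  rw [hscale, hlaw, gaussianReal_map_const_mul, mul_zero]
  congr 1
  ext
  simp [hσ.ne', add_sub_cancel_left, inv_pow, sq_nonneg]

lemma measure_increment_le_neg_two_mul (hB : IsStandardBrownianMotion P B) {s a : ℝ}
    (hs : 0 ≤ s) (ha : 0 < a) :
    P {ω | B (s + a ^ 2) ω - B s ω ≤ -(2 * a)} = gaussianDropProb := by
  have hset : {ω | B (s + a ^ 2) ω - B s ω ≤ -(2 * a)}
      = (fun ω => (B (s + a ^ 2) ω - B s ω) / a) ⁻¹' Iic (-2) := by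
    ext ω
    simp [div_le_iff₀ ha]
  rw [hset, ← Measure.map_apply ((hB.measurable_increment _ _).div_const a) measurableSet_Iic,
    hB.map_increment_div hs ha, gaussianDropProb]

lemma measure_mul_sqrt_lt_sub_init (hB : IsStandardBrownianMotion P B) {u : ℝ} (hu : 0 < u)
    (r : ℝ) : P {ω | r * √u < B u ω - B 0 ω} = gaussianReal 0 1 (Ioi r) := by
  have hlaw := hB.map_increment_div le_rfl (Real.sqrt_pos.mpr hu)
  rw [zero_add, Real.sq_sqrt hu.le] at hlaw
  have hset : {ω | r * √u < B u ω - B 0 ω} = (fun ω => (B u ω - B 0 ω) / √u) ⁻¹' Ioi r := by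
    ext ω
    simp [lt_div_iff₀ (Real.sqrt_pos.mpr hu)]
  rw [hset, ← Measure.map_apply ((hB.measurable_increment _ _).div_const √u) measurableSet_Ioi,
    hlaw]

lemma measure_inter_increment (hB : IsStandardBrownianMotion P B) {s t : ℝ} (hs : 0 ≤ s)
    (hst : s ≤ t) {E : Set Ω} (hE : MeasurableSet[pastMeasurableSpace B s] E) {A : Set ℝ}
    (hA : MeasurableSet A) :
    P (E ∩ (fun ω => B t ω - B s ω) ⁻¹' A) = P E * P ((fun ω => B t ω - B s ω) ⁻¹' A) := by
  rw [inter_comm, mul_comm]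
  exact ((hB.indep_incr s t hs hst).indepSet_of_measurableSet ⟨A, hA, rfl⟩ hE).measure_inter_eq_mul

lemma measure_slice_lowBeforeHit_inter_dropAfter (hB : IsStandardBrownianMotion P B) (x : ℝ)
    {u a : ℝ} (hu : 0 ≤ u) (ha : 0 < a) :
    P (Prod.mk u ⁻¹' (lowBeforeHit B x a ∩ dropAfter B a))
      = gaussianDropProb * P (Prod.mk u ⁻¹' lowBeforeHit B x a) := by
  have hdrop : Prod.mk u ⁻¹' dropAfter B a
      =ᵐ[P] (fun ω => B (u + a ^ 2) ω - B u ω) ⁻¹' Iic (-(2 * a)) := by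
    filter_upwards [hB.cont] with ω hc
    change (_ ≤ (_ : ℝ)) = (_ ≤ (_ : ℝ))
    rw [dyadicLimsup_eq hc, dyadicLimsup_eq hc]
  have hpast : MeasurableSet[pastMeasurableSpace B u] (Prod.mk u ⁻¹' lowBeforeHit B x a) :=
    (measurableSet_past_positiveOnRatUpTo B x u).inter
      (((measurable_past_dyadicLimsup hu).const_add x) measurableSet_Iic)
  have hcongr := measure_congr (ae_eq_set_inter (ae_eq_refl (Prod.mk u ⁻¹' lowBeforeHit B x a))
    hdrop)
  rw [preimage_inter, hcongr,
    hB.measure_inter_increment hu (le_add_of_nonneg_right (sq_nonneg a)) hpast measurableSet_Iic,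
    ← hB.measure_increment_le_neg_two_mul hu ha, mul_comm]
  rfl

variable [IsProbabilityMeasure P]

lemma measure_positiveOnRatUpTo_add_sq_le (hB : IsStandardBrownianMotion P B) {x u a : ℝ}
    (hu : 0 ≤ u) (ha : 0 < a) :
    P (positiveOnRatUpTo B x (u + a ^ 2))
      ≤ P {ω | a < x + B u ω} + P (positiveOnRatUpTo B x u) * (1 - gaussianDropProb) := by
  set D := (fun ω => B (u + a ^ 2) ω - B u ω) ⁻¹' Iic (-(2 * a))
  have hD : P D = gaussianDropProb := hB.measure_increment_le_neg_two_mul hu ha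
  have hcover : positiveOnRatUpTo B x (u + a ^ 2)
      ≤ᵐ[P] ({ω | a < x + B u ω} ∪ (positiveOnRatUpTo B x u ∩ Dᶜ) : Set Ω) := by
    filter_upwards [hB.cont] with ω hc (hω : ω ∈ positiveOnRatUpTo B x (u + a ^ 2))
    rcases lt_or_ge a (x + B u ω) with hA | hA
    · exact Or.inl hA
    refine Or.inr ⟨positiveOnRatUpTo_anti B x (le_add_of_nonneg_right (sq_nonneg a)) hω,
      fun (hdrop : B (u + a ^ 2) ω - B u ω ≤ -(2 * a)) => ?_⟩
    have hend := nonneg_of_mem_positiveOnRatUpTo hc hω (s := u + a ^ 2) ⟨by positivity, le_rfl⟩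
    linarith
  calc P (positiveOnRatUpTo B x (u + a ^ 2))
      ≤ P ({ω | a < x + B u ω} ∪ (positiveOnRatUpTo B x u ∩ Dᶜ)) := measure_mono_ae hcover
    _ ≤ P {ω | a < x + B u ω} + P (positiveOnRatUpTo B x u ∩ Dᶜ) := measure_union_le _ _
    _ = P {ω | a < x + B u ω} + P (positiveOnRatUpTo B x u) * (1 - gaussianDropProb) := by
      rw [← preimage_compl, hB.measure_inter_increment hu (le_add_of_nonneg_right (sq_nonneg a))
        (measurableSet_past_positiveOnRatUpTo B x u) measurableSet_Iic.compl, preimage_compl,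
        prob_compl_eq_one_sub (hB.measurable_increment _ _ measurableSet_Iic), hD]

lemma measure_positiveOnRatUpTo_checkTime_succ_le (hB : IsStandardBrownianMotion P B) {x : ℝ}
    (hx : 0 < x) (n : ℕ) :
    P (positiveOnRatUpTo B x (checkTime x (n + 1))) ≤ gaussianReal 0 1 (Ioi n)
      + P (positiveOnRatUpTo B x (checkTime x n)) * (1 - gaussianDropProb) := by
  have hu : 0 < checkTime x n := one_pos.trans_le (one_le_checkTime x n)
  have htail : P {ω | x + n * √(checkTime x n) < x + B (checkTime x n) ω}
      = gaussianReal 0 1 (Ioi n) := by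
    rw [← hB.measure_mul_sqrt_lt_sub_init hu n]
    refine measure_congr ?_
    filter_upwards [hB.init] with ω h0
    change (_ < _) = (_ < _)
    rw [h0, sub_zero, add_lt_add_iff_left]
  rw [← htail]
  exact hB.measure_positiveOnRatUpTo_add_sq_le hu.le (by positivity)

lemma measure_iInter_positiveOnRatUpTo_checkTime (hB : IsStandardBrownianMotion P B) {x : ℝ}
    (hx : 0 < x) : P (⋂ n, positiveOnRatUpTo B x (checkTime x n)) = 0 :=
  ENNReal.eq_zero_of_tendsto_of_le_add_mul
    (tendsto_measure_iInter_atTop (fun _ => (pastMeasurableSpace_le hB.measurable _ _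
        (measurableSet_past_positiveOnRatUpTo B x _)).nullMeasurableSet)
      ((positiveOnRatUpTo_anti B x).comp_monotone (monotone_checkTime x))
      ⟨0, measure_ne_top _ _⟩)
    (tendsto_measure_Ioi_natCast_atTop _) (measure_ne_top _ _)
    (ENNReal.sub_lt_self ENNReal.one_ne_top one_ne_zero gaussianDropProb_pos.ne')
    (hB.measure_positiveOnRatUpTo_checkTime_succ_le hx)

lemma ae_exists_hit (hB : IsStandardBrownianMotion P B) {x : ℝ} (hx : 0 < x) :
    ∀ᵐ ω ∂P, ∃ t : ℝ, 0 ≤ t ∧ x + B t ω = 0 := by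
  have hnot := measure_eq_zero_iff_ae_notMem.mp (hB.measure_iInter_positiveOnRatUpTo_checkTime hx)
  filter_upwards [hB.cont, hB.init, hnot] with ω hc h0 hω
  simp only [mem_iInter, positiveOnRatUpTo, mem_ofPred_eq, not_forall, not_lt] at hω
  obtain ⟨-, q, hq0, -, hq⟩ := hω
  obtain ⟨t, ht, hzero⟩ := intermediate_value_Icc' hq0 (continuous_const.add hc).continuousOn
    ⟨hq, by simp [h0, hx.le]⟩
  exact ⟨t, ht.1, hzero⟩

lemma lintegral_volume_slice_lowBeforeHit_le (hB : IsStandardBrownianMotion P B) (x : ℝ)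
    {a : ℝ} (ha : 0 < a) :
    ∫⁻ ω, volume.restrict (Ioi 0) ((·, ω) ⁻¹' lowBeforeHit B x a) ∂P
      ≤ gaussianDropProb⁻¹ * ENNReal.ofReal (a ^ 2) := by
  have hJ := measurableSet_lowBeforeHit hB.measurable x a
  have hJD := hJ.inter (measurableSet_dropAfter hB.measurable a)
  have hp0 : gaussianDropProb ≠ 0 := gaussianDropProb_pos.ne'
  have hp0' : gaussianDropProb ≠ ⊤ := ne_top_of_le_ne_top ENNReal.one_ne_top gaussianDropProb_le_one
  calc ∫⁻ ω, volume.restrict (Ioi 0) ((·, ω) ⁻¹' lowBeforeHit B x a) ∂P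
      = ∫⁻ u in Ioi 0, P (Prod.mk u ⁻¹' lowBeforeHit B x a) := by
        rw [← Measure.prod_apply_symm hJ, Measure.prod_apply hJ]
    _ = ∫⁻ u in Ioi 0,
          gaussianDropProb⁻¹ * P (Prod.mk u ⁻¹' (lowBeforeHit B x a ∩ dropAfter B a)) :=
        setLIntegral_congr_fun measurableSet_Ioi fun u hu => by
          rw [hB.measure_slice_lowBeforeHit_inter_dropAfter x (le_of_lt hu) ha,
            ENNReal.inv_mul_cancel_left hp0 hp0']
    _ = gaussianDropProb⁻¹
          * ∫⁻ ω, volume.restrict (Ioi 0) ((·, ω) ⁻¹' (lowBeforeHit B x a ∩ dropAfter B a)) ∂P := by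
        rw [lintegral_const_mul' _ _ (ENNReal.inv_ne_top.mpr hp0), ← Measure.prod_apply hJD,
          Measure.prod_apply_symm hJD]
    _ ≤ gaussianDropProb⁻¹ * ∫⁻ _, ENNReal.ofReal (a ^ 2) ∂P := by
        gcongr gaussianDropProb⁻¹ * ?_
        refine lintegral_mono_ae ?_
        filter_upwards [hB.cont] with ω hc
        exact volume_slice_lowBeforeHit_inter_dropAfter_le hc ha
    _ = gaussianDropProb⁻¹ * ENNReal.ofReal (a ^ 2) := by simp

lemma ae_tsum_volume_slice_lowBeforeHit_lt_top (hB : IsStandardBrownianMotion P B) (x : ℝ) :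
    ∀ᵐ ω ∂P, ∑' n, 2 ^ (n + 1) * volume.restrict (Ioi 0)
      ((·, ω) ⁻¹' lowBeforeHit B x (2⁻¹ ^ n)) < ⊤ := by
  have hmeas : ∀ n : ℕ, Measurable fun ω => volume.restrict (Ioi (0 : ℝ))
      ((·, ω) ⁻¹' lowBeforeHit B x (2⁻¹ ^ n)) := fun n =>
    measurable_measure_prodMk_right (measurableSet_lowBeforeHit hB.measurable x _)
  refine ae_lt_top (Measurable.tsum fun n => (hmeas n).const_mul _) (ne_top_of_le_ne_top
    (b := ∑' n : ℕ, gaussianDropProb⁻¹ * 2 * 2⁻¹ ^ n) ?_ ?_)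
  · rw [ENNReal.tsum_mul_left, ENNReal.tsum_geometric, ENNReal.one_sub_inv_two, inv_inv]
    exact ENNReal.mul_ne_top (ENNReal.mul_ne_top (ENNReal.inv_ne_top.mpr gaussianDropProb_pos.ne')
      ENNReal.ofNat_ne_top) ENNReal.ofNat_ne_top
  rw [lintegral_tsum fun n => ((hmeas n).const_mul _).aemeasurable]
  refine ENNReal.tsum_le_tsum fun n => ?_
  rw [lintegral_const_mul _ (hmeas n)]
  calc 2 ^ (n + 1) * ∫⁻ ω, volume.restrict (Ioi 0) ((·, ω) ⁻¹' lowBeforeHit B x (2⁻¹ ^ n)) ∂P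
      ≤ 2 ^ (n + 1) * (gaussianDropProb⁻¹ * ENNReal.ofReal ((2⁻¹ ^ n) ^ 2)) := by
        gcongr
        exact hB.lintegral_volume_slice_lowBeforeHit_le x (by positivity)
    _ = gaussianDropProb⁻¹ * 2 * 2⁻¹ ^ n * (2 ^ n * 2⁻¹ ^ n) := by
        rw [ENNReal.ofReal_pow (by positivity), ENNReal.ofReal_pow (by positivity),
          ENNReal.ofReal_inv_of_pos two_pos, ENNReal.ofReal_ofNat]
        ring
    _ = gaussianDropProb⁻¹ * 2 * 2⁻¹ ^ n := by
        rw [← mul_pow, ENNReal.mul_inv_cancel two_ne_zero ENNReal.ofNat_ne_top, one_pow, mul_one]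

end IsStandardBrownianMotion

end

/-- The Brownian-motion case of the integrability claim in the proof of Lemma 4.4:
for `x > 0`, almost surely the first hitting time `T = inf{t ≥ 0 : x + B t = 0}` of
`0` by `x + B` is finite (the hitting set is nonempty), and
`∫₀^T du / (x + B u) < ∞`. -/
theorem stmt_16 {Ω : Type*} [MeasurableSpace Ω] (P : Measure Ω)
    [IsProbabilityMeasure P] (B : ℝ → Ω → ℝ)
    (hB : IsStandardBrownianMotion P B) (x : ℝ) (hx : 0 < x) :
    ∀ᵐ ω ∂P, (∃ t : ℝ, 0 ≤ t ∧ x + B t ω = 0) ∧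
      ∫⁻ u in Set.Ioo (0 : ℝ) (sInf {t : ℝ | 0 ≤ t ∧ x + B t ω = 0}),
        ENNReal.ofReal (1 / (x + B u ω)) < ⊤ := by
  filter_upwards [hB.cont, hB.init, hB.ae_exists_hit hx,
    hB.ae_tsum_volume_slice_lowBeforeHit_lt_top x] with ω hc h0 hhit hfin
  set T := sInf {t : ℝ | 0 ≤ t ∧ x + B t ω = 0}
  have hpos : ∀ u, 0 ≤ u → u < T → 0 < x + B u ω :=
    fun u => pos_of_lt_sInf_zeros (continuous_const.add hc) (by simpa [h0] using hx)
  have hbound := setLIntegral_Ioo_ofReal_one_div_le (T := T)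
    (fun n => measurable_prodMk_right (measurableSet_lowBeforeHit hB.measurable x _))
    fun u hu => ⟨hpos u hu.1.le hu.2, fun n hn =>
      mem_lowBeforeHit hc (fun s hs => hpos s hs.1 (hs.2.trans_lt hu.2)) hn⟩
  exact ⟨hhit, hbound.trans_lt (ENNReal.add_lt_top.mpr ⟨ENNReal.ofReal_lt_top, hfin⟩)⟩
end
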